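/- arXiv:1204.6645 — 11 statements merged into one kernel-verified Lean document; each statement's English description precedes it below -/
import Mathlib

section
/- Let X and Y be finite nonempty sets and f : X × Y → ℝ a function. Define f(K_{1,1}) = E_{x,y}[f(x,y)], f(K_{1,2}) = E_{x,y,y'}[f(x,y)f(x,y')], and f(K_{2,2}) = E_{x,x',y,y'}[f(x,y)f(x,y')f(x',y)f(x',y')], where all expectations are over uniform independent choices. Then f(K_{1,1})^4 ≤ f(K_{1,2})^2 ≤ f(K_{2,2}). -/
open Finset

theorem stmt_0 {X Y : Type*} [Fintype X] [Fintype Y] [Nonempty X] [Nonempty Y]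
    (f : X → Y → ℝ) :
    ((∑ x : X, ∑ y : Y, f x y) / ((Fintype.card X : ℝ) * (Fintype.card Y : ℝ))) ^ 4 ≤
        ((∑ x : X, ∑ y : Y, ∑ y' : Y, f x y * f x y') /
          ((Fintype.card X : ℝ) * (Fintype.card Y : ℝ) * (Fintype.card Y : ℝ))) ^ 2 ∧
      ((∑ x : X, ∑ y : Y, ∑ y' : Y, f x y * f x y') /
          ((Fintype.card X : ℝ) * (Fintype.card Y : ℝ) * (Fintype.card Y : ℝ))) ^ 2 ≤
        (∑ x : X, ∑ x' : X, ∑ y : Y, ∑ y' : Y, f x y * f x y' * f x' y * f x' y') /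
          (((Fintype.card X : ℝ) * (Fintype.card Y : ℝ)) ^ 2) := by
  have hn : (0:ℝ) < (Fintype.card X : ℝ) := by
    exact_mod_cast Fintype.card_pos
  have hm : (0:ℝ) < (Fintype.card Y : ℝ) := by
    exact_mod_cast Fintype.card_pos
  set n : ℝ := (Fintype.card X : ℝ)
  set m : ℝ := (Fintype.card Y : ℝ)
  set g : X → ℝ := fun x => ∑ y : Y, f x y with hg
  set h : Y → Y → ℝ := fun y y' => ∑ x : X, f x y * f x y' with hh
  -- rewrite triple sum
  have e1 : (∑ x : X, ∑ y : Y, ∑ y' : Y, f x y * f x y') = ∑ x : X, (g x) ^ 2 := by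
    refine Finset.sum_congr rfl fun x _ => ?_
    rw [hg, sq, Finset.sum_mul_sum]
  have e2 : (∑ x : X, (g x) ^ 2) = ∑ y : Y, ∑ y' : Y, h y y' := by
    simp only [hg, hh, sq, Finset.sum_mul_sum]
    rw [Finset.sum_comm]
    refine Finset.sum_congr rfl fun y _ => Finset.sum_comm
  -- rewrite quadruple sum
  have e3 : (∑ x : X, ∑ x' : X, ∑ y : Y, ∑ y' : Y, f x y * f x y' * f x' y * f x' y')
      = ∑ y : Y, ∑ y' : Y, (h y y') ^ 2 := by
    have : ∀ y y', (h y y') ^ 2 = ∑ x : X, ∑ x' : X, f x y * f x y' * f x' y * f x' y' := by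
      intro y y'
      rw [hh, sq, Finset.sum_mul_sum]
      exact Finset.sum_congr rfl fun x _ => Finset.sum_congr rfl fun x' _ => by ring
    simp only [this]
    calc (∑ x : X, ∑ x' : X, ∑ y : Y, ∑ y' : Y, f x y * f x y' * f x' y * f x' y')
        = ∑ x : X, ∑ y : Y, ∑ x' : X, ∑ y' : Y, f x y * f x y' * f x' y * f x' y' :=
          Finset.sum_congr rfl fun x _ => Finset.sum_comm
      _ = ∑ x : X, ∑ y : Y, ∑ y' : Y, ∑ x' : X, f x y * f x y' * f x' y * f x' y' :=
          Finset.sum_congr rfl fun x _ => Finset.sum_congr rfl fun y _ => Finset.sum_comm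
      _ = ∑ y : Y, ∑ x : X, ∑ y' : Y, ∑ x' : X, f x y * f x y' * f x' y * f x' y' :=
          Finset.sum_comm
      _ = ∑ y : Y, ∑ y' : Y, ∑ x : X, ∑ x' : X, f x y * f x y' * f x' y * f x' y' :=
          Finset.sum_congr rfl fun y _ => Finset.sum_comm
  -- Cauchy-Schwarz instances
  have cs1 : (∑ x : X, g x) ^ 2 ≤ n * ∑ x : X, (g x) ^ 2 := by
    simpa using sq_sum_le_card_mul_sum_sq (s := (univ : Finset X)) (f := g)
  have cs2 : (∑ p : Y × Y, h p.1 p.2) ^ 2 ≤ (m * m) * ∑ p : Y × Y, (h p.1 p.2) ^ 2 := by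
    have := sq_sum_le_card_mul_sum_sq (s := (univ : Finset (Y × Y))) (f := fun p => h p.1 p.2)
    simpa [Fintype.card_prod, mul_comm] using this
  have hp1 : (∑ p : Y × Y, h p.1 p.2) = ∑ y : Y, ∑ y' : Y, h y y' := Fintype.sum_prod_type _
  have hp2 : (∑ p : Y × Y, (h p.1 p.2) ^ 2) = ∑ y : Y, ∑ y' : Y, (h y y') ^ 2 :=
    Fintype.sum_prod_type _
  rw [hp1, hp2] at cs2
  have hsq_nonneg : (0:ℝ) ≤ ∑ x : X, (g x) ^ 2 := by positivity
  have hsq2_nonneg : (0:ℝ) ≤ ∑ y : Y, ∑ y' : Y, (h y y') ^ 2 := by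
    apply Finset.sum_nonneg; intro y _; apply Finset.sum_nonneg; intro y' _; positivity
  constructor
  · rw [e1]
    have key : ((∑ x : X, g x) / (n * m)) ^ 2 ≤ (∑ x : X, (g x) ^ 2) / (n * m * m) := by
      rw [div_pow, div_le_div_iff₀ (by positivity) (by positivity)]
      calc (∑ x : X, g x) ^ 2 * (n * m * m) ≤ (n * ∑ x : X, (g x) ^ 2) * (n * m * m) := by
            apply mul_le_mul_of_nonneg_right cs1 (by positivity)
        _ = (∑ x : X, (g x) ^ 2) * (n * m) ^ 2 := by ring
    calc ((∑ x : X, g x) / (n * m)) ^ 4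
        = (((∑ x : X, g x) / (n * m)) ^ 2) ^ 2 := by ring
      _ ≤ ((∑ x : X, (g x) ^ 2) / (n * m * m)) ^ 2 := by
          apply pow_le_pow_left₀ (by positivity) key
  · rw [e1, e2, e3]
    rw [div_pow, div_le_div_iff₀ (by positivity) (by positivity)]
    calc (∑ y : Y, ∑ y' : Y, h y y') ^ 2 * (n * m) ^ 2
        ≤ ((m * m) * ∑ y : Y, ∑ y' : Y, (h y y') ^ 2) * (n * m) ^ 2 := by
          apply mul_le_mul_of_nonneg_right cs2 (by positivity)
      _ = (∑ y : Y, ∑ y' : Y, (h y y') ^ 2) * (n * m * m) ^ 2 := by ring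
end

section
/- Let H be a graph on vertex set {1,…,m}, Γ a weighted graph with finite nonempty vertex subsets X₁,…,X_m, and ab an edge of H. Suppose (X_a, X_b)_Γ is (p, γ√(|X_a||X_b|))-jumbled. Let H_{−ab} be H with the edge ab removed and H_{−a,−b} be H with all edges incident to a or b removed. Then for any symmetric function f : V(Γ) × V(Γ) → [0,1], |E_{x∈X_a, y∈X_b}[(Γ(x,y) − p) · f(H_{−ab} | a→x, b→y)]| ≤ γ √(f(H_{−ab}) · f(H_{−a,−b})), where f(H' | partial assignment) denotes the average over uniform compatible extensions of the product of f over the edges of H', and f(H') the full average. -/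
open Classical in
/-- The density of compatible weighted homomorphisms of `H` into the weighted graph
given by the edge weights `f i j`, with vertex `i` landing in `Y i`. -/
noncomputable def den {V ι : Type*} [Fintype V] [Fintype ι] [LinearOrder ι]
    (f : ι → ι → V → V → ℝ) (H : SimpleGraph ι) (Y : ι → Finset V) : ℝ :=
  (∑ z ∈ Fintype.piFinset Y, ∏ i : ι, ∏ j : ι,
      if i < j ∧ H.Adj i j then f i j (z i) (z j) else 1) /
    ∏ i : ι, ((Y i).card : ℝ)

/-- `(p, γ√(|A||B|))`-jumbledness of the pair `(A, B)` in the weighted graph `Γ`,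
in functional form. -/
def Jumbled {V : Type*} (Γ : V → V → ℝ) (A B : Finset V) (p γ : ℝ) : Prop :=
  ∀ u v : V → ℝ, (∀ x, 0 ≤ u x ∧ u x ≤ 1) → (∀ y, 0 ≤ v y ∧ v y ≤ 1) →
    |(∑ x ∈ A, ∑ y ∈ B, (Γ x y - p) * u x * v y) / ((A.card : ℝ) * (B.card : ℝ))|
      ≤ γ * Real.sqrt ((∑ x ∈ A, u x) / (A.card : ℝ)) *
          Real.sqrt ((∑ y ∈ B, v y) / (B.card : ℝ))

/-
Write `H' = H - ab` and `H'' = H - a - b`. Since `ab ∉ H'`, the weight of a map `z` for `H'`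
factors as `S_a(z a, z) · S_b(z b, z) · W(z)`, where `S_c(w, z)` is the product of `f(w, z j)`
over the `H'`-neighbours `j` of `c` and `W(z)` is the weight of `z` for `H''`; none of the three
depends on `z a` or `z b`. Averaging over `z`, the left-hand side becomes
`𝔼_z [𝔼_{x,y} (Γ(x,y) - p) S_a(x,z) S_b(y,z)] W(z)`. Jumbledness bounds the inner average by
`γ √(𝔼_x S_a(x,z) · 𝔼_y S_b(y,z))`, and Cauchy–Schwarz with weight `W` turns the average of these
bounds into `γ √(𝔼_z [𝔼_x S_a · 𝔼_y S_b · W] · 𝔼_z W) = γ √(f(H') f(H''))`.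
-/

open Finset Function
open Fintype (piFinset)
open scoped BigOperators

section PiFinset

variable {ι V : Type*} [Fintype ι] [DecidableEq ι]

lemma sum_sum_piFinset_update_singleton {β : Type*} [AddCommMonoid β] (X : ι → Finset V)
    (c : ι) (F : (ι → V) → β) :
    ∑ t ∈ X c, ∑ z ∈ piFinset (update X c {t}), F z = ∑ z ∈ piFinset X, F z := by
  classical
  refine (Finset.sum_congr rfl fun t ht => ?_).trans
    (sum_fiberwise_of_maps_to (g := fun z => z c) (fun z hz => Fintype.mem_piFinset.1 hz c) F)
  rw [Fintype.piFinset_update_singleton_eq_filter_piFinset_eq X c ht]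

lemma sum_piFinset_update_singleton_congr {β : Type*} [AddCommMonoid β] (X : ι → Finset V)
    (c : ι) {F : (ι → V) → β} (hF : ∀ z s, F (update z c s) = F z) (t t' : V) :
    ∑ z ∈ piFinset (update X c {t}), F z = ∑ z ∈ piFinset (update X c {t'}), F z := by
  refine sum_nbij' (update · c t') (update · c t) ?_ ?_ ?_ ?_ fun z _ => (hF z t').symm
  all_goals
    intro z hz
    simp only [Fintype.mem_piFinset, update_apply] at hz ⊢
  all_goals grind

lemma card_piFinset_update_singleton_congr (X : ι → Finset V) (c : ι) (t t' : V) :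
    #(piFinset (update X c {t})) = #(piFinset (update X c {t'})) := by
  simpa only [card_eq_sum_ones] using
    sum_piFinset_update_singleton_congr X c (F := fun _ => 1) (fun _ _ => rfl) t t'

variable {K : Type*} [Semifield K] [CharZero K]

lemma expect_piFinset_eq_expect_expect_update (X : ι → Finset V) (c : ι) (F : (ι → V) → K) :
    𝔼 z ∈ piFinset X, F z = 𝔼 t ∈ X c, 𝔼 z ∈ piFinset (update X c {t}), F z := by
  obtain hc | ⟨t₀, -⟩ := (X c).eq_empty_or_nonempty
  · rw [hc, Fintype.piFinset_eq_empty.2 ⟨c, hc⟩, expect_empty, expect_empty]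
  have hcard : #(piFinset X) = #(X c) * #(piFinset (update X c {t₀})) := by
    rw [card_eq_sum_ones, ← sum_sum_piFinset_update_singleton X c]
    simp [card_piFinset_update_singleton_congr X c _ t₀]
  simp only [Finset.expect_eq_sum_div_card, card_piFinset_update_singleton_congr X c _ t₀,
    ← sum_div, sum_sum_piFinset_update_singleton, hcard, div_div, Nat.cast_mul, mul_comm]

lemma expect_piFinset_update_singleton (X : ι → Finset V) {c : ι} (hc : (X c).Nonempty)
    {F : (ι → V) → K} (hF : ∀ z s, F (update z c s) = F z) (t : V) :
    𝔼 z ∈ piFinset (update X c {t}), F z = 𝔼 z ∈ piFinset X, F z := by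
  rw [expect_piFinset_eq_expect_expect_update X c]
  refine (expect_const hc _).symm.trans (expect_congr rfl fun t' _ => ?_)
  simp only [Finset.expect_eq_sum_div_card, sum_piFinset_update_singleton_congr X c hF t t',
    card_piFinset_update_singleton_congr X c t t']

end PiFinset

lemma expect_expect_eq_sum_sum_div {α β K : Type*} [Semifield K] [CharZero K] (A : Finset α)
    (B : Finset β) (g : α → β → K) :
    𝔼 x ∈ A, 𝔼 y ∈ B, g x y = (∑ x ∈ A, ∑ y ∈ B, g x y) / (#A * #B) := by
  simp only [expect_eq_sum_div_card, ← sum_div, div_div, mul_comm]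

lemma Real.expect_sqrt_mul_le {ι : Type*} (s : Finset ι) {U W : ι → ℝ}
    (hU : ∀ i ∈ s, 0 ≤ U i) (hW : ∀ i ∈ s, 0 ≤ W i) :
    𝔼 i ∈ s, √(U i) * W i ≤ √((𝔼 i ∈ s, U i * W i) * 𝔼 i ∈ s, W i) := by
  have hfactor : ∀ i ∈ s, √(U i) * W i = √(U i * W i) * √(W i) := fun i hi => by
    rw [Real.sqrt_mul (hU i hi), mul_assoc, Real.mul_self_sqrt (hW i hi)]
  have hcs := expect_mul_sq_le_sq_mul_sq s (fun i => √(U i * W i)) (fun i => √(W i))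
  rw [expect_congr rfl hfactor]
  refine le_trans (le_abs_self _) (Real.abs_le_sqrt (hcs.trans_eq ?_))
  congr 1 <;> refine expect_congr rfl fun i hi => Real.sq_sqrt ?_
  exacts [mul_nonneg (hU i hi) (hW i hi), hW i hi]

namespace Jumbled

variable {V : Type*} {Γ : V → V → ℝ} {A B : Finset V} {p γ : ℝ}

lemma abs_expect_expect_le (h : Jumbled Γ A B p γ) {u v : V → ℝ}
    (hu : ∀ x, 0 ≤ u x ∧ u x ≤ 1) (hv : ∀ y, 0 ≤ v y ∧ v y ≤ 1) :
    |𝔼 x ∈ A, 𝔼 y ∈ B, (Γ x y - p) * u x * v y|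
      ≤ γ * √(𝔼 x ∈ A, u x) * √(𝔼 y ∈ B, v y) := by
  rw [expect_expect_eq_sum_sum_div, expect_eq_sum_div_card, expect_eq_sum_div_card]
  exact h u v hu hv

lemma nonneg (h : Jumbled Γ A B p γ) (hA : A.Nonempty) (hB : B.Nonempty) : 0 ≤ γ := by
  have := h.abs_expect_expect_le (u := 1) (v := 1) (fun _ => by simp) (fun _ => by simp)
  simp only [Pi.one_apply, expect_const hA, expect_const hB, Real.sqrt_one, mul_one] at this
  exact (abs_nonneg _).trans this

lemma abs_expect_mul_le (h : Jumbled Γ A B p γ) (hA : A.Nonempty) (hB : B.Nonempty)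
    {ι : Type*} (Z : Finset ι) {u v : ι → V → ℝ} (hu : ∀ z x, 0 ≤ u z x ∧ u z x ≤ 1)
    (hv : ∀ z y, 0 ≤ v z y ∧ v z y ≤ 1) {W : ι → ℝ} (hW : ∀ z ∈ Z, 0 ≤ W z) :
    |𝔼 z ∈ Z, (𝔼 x ∈ A, 𝔼 y ∈ B, (Γ x y - p) * u z x * v z y) * W z|
      ≤ γ * √((𝔼 z ∈ Z, (𝔼 x ∈ A, u z x) * (𝔼 y ∈ B, v z y) * W z) * 𝔼 z ∈ Z, W z) := by
  have hγ := h.nonneg hA hB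
  have hU : ∀ z, 0 ≤ (𝔼 x ∈ A, u z x) * 𝔼 y ∈ B, v z y := fun z =>
    mul_nonneg (expect_nonneg fun x _ => (hu z x).1) (expect_nonneg fun y _ => (hv z y).1)
  calc _ ≤ 𝔼 z ∈ Z, |(𝔼 x ∈ A, 𝔼 y ∈ B, (Γ x y - p) * u z x * v z y) * W z| :=
        abs_expect_le _ _
    _ ≤ 𝔼 z ∈ Z, γ * (√((𝔼 x ∈ A, u z x) * 𝔼 y ∈ B, v z y) * W z) := by
        gcongr with z hz
        rw [abs_mul, abs_of_nonneg (hW z hz), Real.sqrt_mul (expect_nonneg fun x _ => (hu z x).1),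
          ← mul_assoc, ← mul_assoc]
        exact mul_le_mul_of_nonneg_right (h.abs_expect_expect_le (hu z) (hv z)) (hW z hz)
    _ ≤ γ * √((𝔼 z ∈ Z, (𝔼 x ∈ A, u z x) * (𝔼 y ∈ B, v z y) * W z) * 𝔼 z ∈ Z, W z) := by
        rw [← mul_expect]
        exact mul_le_mul_of_nonneg_left
          (Real.expect_sqrt_mul_le Z (fun z _ => hU z) hW) hγ

end Jumbled

section Weights

variable {ι V : Type*} [Fintype ι] (f : V → V → ℝ) (G : SimpleGraph ι)

open Classical in
noncomputable def starWeight (c : ι) (w : V) (z : ι → V) : ℝ :=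
  ∏ j, if G.Adj c j then f w (z j) else 1

open Classical in
noncomputable def edgeWeight [LinearOrder ι] (z : ι → V) : ℝ :=
  ∏ i, ∏ j, if i < j ∧ G.Adj i j then f (z i) (z j) else 1

variable {f G}

lemma starWeight_nonneg (hf : ∀ x y, 0 ≤ f x y) (c : ι) (w : V) (z : ι → V) :
    0 ≤ starWeight f G c w z :=
  prod_nonneg fun j _ => by split_ifs <;> simp [hf]

lemma starWeight_le_one (hf : ∀ x y, 0 ≤ f x y ∧ f x y ≤ 1) (c : ι) (w : V) (z : ι → V) :
    starWeight f G c w z ≤ 1 :=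
  prod_le_one (fun j _ => by split_ifs <;> simp [hf]) fun j _ => by split_ifs <;> simp [hf]

lemma starWeight_update_of_not_adj [DecidableEq ι] {c d : ι} (h : ¬G.Adj c d) (w : V)
    (z : ι → V) (s : V) :
    starWeight f G c w (update z d s) = starWeight f G c w z := by
  refine prod_congr rfl fun j _ => ?_
  rcases eq_or_ne j d with rfl | hj
  · simp [h]
  · rw [update_of_ne hj]

variable [LinearOrder ι]

lemma edgeWeight_nonneg (hf : ∀ x y, 0 ≤ f x y) (z : ι → V) : 0 ≤ edgeWeight f G z :=
  prod_nonneg fun i _ => prod_nonneg fun j _ => by split_ifs <;> simp [hf]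

lemma edgeWeight_update_of_forall_not_adj {d : ι} (h : ∀ j, ¬G.Adj d j) (z : ι → V) (s : V) :
    edgeWeight f G (update z d s) = edgeWeight f G z := by
  refine prod_congr rfl fun i _ => prod_congr rfl fun j _ => ?_
  by_cases hij : G.Adj i j
  · rw [update_of_ne (by rintro rfl; exact h j hij),
      update_of_ne (by rintro rfl; exact h i hij.symm)]
  · simp [hij]

lemma edgeWeight_eq_starWeight_mul (hf : ∀ x y, f x y = f y x) {c : ι} {G' : SimpleGraph ι}
    (hG' : ∀ i j, G'.Adj i j ↔ G.Adj i j ∧ i ≠ c ∧ j ≠ c) (z : ι → V) :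
    edgeWeight f G z = starWeight f G c (z c) z * edgeWeight f G' z := by
  classical
  set T : ι → ι → ℝ := fun i j => if i < j ∧ G.Adj i j then f (z i) (z j) else 1
  -- the factor of a pair `(i, j)` lies in row `c`, in column `c`, or else is a factor for `G'`
  have hsplit : ∀ i j, T i j = (if i = c then T c j else 1) * (if j = c then T i c else 1) *
      (if i < j ∧ G'.Adj i j then f (z i) (z j) else 1) := by
    intro i j
    by_cases hi : i = c <;> by_cases hj : j = c <;> simp [T, hG', hi, hj]
  have hstar : ∀ j, T c j * T j c = if G.Adj c j then f (z c) (z j) else 1 := by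
    intro j
    rcases lt_trichotomy c j with h | rfl | h
    · simp [T, h, h.not_gt]
    · simp [T]
    · simp [T, h, h.not_gt, G.adj_comm, hf]
  calc edgeWeight f G z = ∏ i, ∏ j, T i j := by unfold edgeWeight; congr!
    _ = (∏ j, T c j) * (∏ i, T i c) * edgeWeight f G' z := by
      rw [prod_congr rfl fun i _ => prod_congr rfl fun j _ => hsplit i j]
      simp only [prod_mul_distrib]
      rw [prod_comm (f := fun i j => if i = c then T c j else 1)]
      simp [edgeWeight]
    _ = starWeight f G c (z c) z * edgeWeight f G' z := by
      rw [← prod_mul_distrib, starWeight]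
      simp_rw [hstar]

lemma edgeWeight_eq_starWeight_mul_starWeight_mul (hf : ∀ x y, f x y = f y x) {a b : ι}
    (hne : a ≠ b) (hab : ¬G.Adj a b) {G'' : SimpleGraph ι}
    (hG'' : ∀ i j, G''.Adj i j ↔ G.Adj i j ∧ i ≠ a ∧ i ≠ b ∧ j ≠ a ∧ j ≠ b) (z : ι → V) :
    edgeWeight f G z =
      starWeight f G a (z a) z * starWeight f G b (z b) z * edgeWeight f G'' z := by
  have hadj : ∀ j, (G.deleteIncidenceSet a).Adj b j ↔ G.Adj b j := fun j => by
    rw [SimpleGraph.deleteIncidenceSet_adj]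
    exact ⟨And.left, fun h => ⟨h, hne.symm, by rintro rfl; exact hab h.symm⟩⟩
  have hstar : starWeight f (G.deleteIncidenceSet a) b (z b) z = starWeight f G b (z b) z := by
    unfold starWeight
    congr! 2 with j
    exact hadj j
  rw [edgeWeight_eq_starWeight_mul hf fun _ _ => SimpleGraph.deleteIncidenceSet_adj,
    edgeWeight_eq_starWeight_mul hf (G := G.deleteIncidenceSet a) (c := b) (G' := G'')
      fun i j => by rw [hG'', SimpleGraph.deleteIncidenceSet_adj]; tauto,
    hstar, mul_assoc]

end Weights

section Density

variable {ι V : Type*} [Fintype ι] [LinearOrder ι] [Fintype V] {f : V → V → ℝ}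

lemma den_eq_expect_edgeWeight (G : SimpleGraph ι) (Y : ι → Finset V) :
    den (fun _ _ u v => f u v) G Y = 𝔼 z ∈ piFinset Y, edgeWeight f G z := by
  rw [expect_eq_sum_div_card, Fintype.card_piFinset, den]
  push_cast
  rfl

lemma den_eq_expect_expect_den_update (G : SimpleGraph ι) {a b : ι} (hne : a ≠ b)
    (X : ι → Finset V) :
    den (fun _ _ u v => f u v) G X =
      𝔼 x ∈ X a, 𝔼 y ∈ X b, den (fun _ _ u v => f u v) G (update (update X a {x}) b {y}) := by
  simp only [den_eq_expect_edgeWeight]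
  rw [expect_piFinset_eq_expect_expect_update X a]
  refine expect_congr rfl fun x _ => ?_
  rw [expect_piFinset_eq_expect_expect_update _ b, update_of_ne hne.symm]

variable {G G'' : SimpleGraph ι} {a b : ι}

lemma den_update_update_eq_expect (hf : ∀ x y, f x y = f y x) (hne : a ≠ b) (hab : ¬G.Adj a b)
    (hG'' : ∀ i j, G''.Adj i j ↔ G.Adj i j ∧ i ≠ a ∧ i ≠ b ∧ j ≠ a ∧ j ≠ b)
    {X : ι → Finset V} (ha : (X a).Nonempty) (hb : (X b).Nonempty) (x y : V) :
    den (fun _ _ u v => f u v) G (update (update X a {x}) b {y}) =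
      𝔼 z ∈ piFinset X, starWeight f G a x z * starWeight f G b y z * edgeWeight f G'' z := by
  have hinv : ∀ c, (c = a ∨ c = b) → ∀ z s,
      starWeight f G a x (update z c s) * starWeight f G b y (update z c s) *
          edgeWeight f G'' (update z c s) =
        starWeight f G a x z * starWeight f G b y z * edgeWeight f G'' z := by
    have hG''c : ∀ c, (c = a ∨ c = b) → ∀ j, ¬G''.Adj c j := by
      rintro c hc j h
      have := (hG'' c j).1 h
      tauto
    rintro c hc z s
    obtain rfl | rfl := hc
    · rw [starWeight_update_of_not_adj G.irrefl, starWeight_update_of_not_adj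
        (fun h => hab h.symm), edgeWeight_update_of_forall_not_adj (hG''c _ (.inl rfl))]
    · rw [starWeight_update_of_not_adj hab, starWeight_update_of_not_adj G.irrefl,
        edgeWeight_update_of_forall_not_adj (hG''c _ (.inr rfl))]
  rw [den_eq_expect_edgeWeight]
  calc _ = 𝔼 z ∈ piFinset (update (update X a {x}) b {y}),
          starWeight f G a x z * starWeight f G b y z * edgeWeight f G'' z := by
        refine expect_congr rfl fun z hz => ?_
        have hz' := Fintype.mem_piFinset.1 hz
        obtain rfl : z a = x := by simpa [hne] using hz' a
        obtain rfl : z b = y := by simpa using hz' b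
        exact edgeWeight_eq_starWeight_mul_starWeight_mul hf hne hab hG'' z
    _ = 𝔼 z ∈ piFinset (update X a {x}),
          starWeight f G a x z * starWeight f G b y z * edgeWeight f G'' z :=
        expect_piFinset_update_singleton _ (by rwa [update_of_ne hne.symm])
          (hinv b (.inr rfl)) y
    _ = _ := expect_piFinset_update_singleton _ ha (hinv a (.inl rfl)) x

lemma expect_expect_mul_den_update_eq (hf : ∀ x y, f x y = f y x) (hne : a ≠ b)
    (hab : ¬G.Adj a b) (hG'' : ∀ i j, G''.Adj i j ↔ G.Adj i j ∧ i ≠ a ∧ i ≠ b ∧ j ≠ a ∧ j ≠ b)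
    {X : ι → Finset V} (ha : (X a).Nonempty) (hb : (X b).Nonempty) (g : V → V → ℝ) :
    𝔼 x ∈ X a, 𝔼 y ∈ X b, g x y * den (fun _ _ u v => f u v) G (update (update X a {x}) b {y}) =
      𝔼 z ∈ piFinset X, (𝔼 x ∈ X a, 𝔼 y ∈ X b,
        g x y * starWeight f G a x z * starWeight f G b y z) * edgeWeight f G'' z := by
  simp_rw [den_update_update_eq_expect hf hne hab hG'' ha hb, mul_expect, expect_mul]
  refine (expect_congr rfl fun x _ => expect_comm _ _ _).trans ((expect_comm _ _ _).trans ?_)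
  simp only [mul_assoc]

lemma den_eq_expect_mul_expect (hf : ∀ x y, f x y = f y x) (hne : a ≠ b)
    (hab : ¬G.Adj a b) (hG'' : ∀ i j, G''.Adj i j ↔ G.Adj i j ∧ i ≠ a ∧ i ≠ b ∧ j ≠ a ∧ j ≠ b)
    {X : ι → Finset V} (ha : (X a).Nonempty) (hb : (X b).Nonempty) :
    den (fun _ _ u v => f u v) G X = 𝔼 z ∈ piFinset X,
      (𝔼 x ∈ X a, starWeight f G a x z) * (𝔼 y ∈ X b, starWeight f G b y z) *
        edgeWeight f G'' z := by
  have h := expect_expect_mul_den_update_eq hf hne hab hG'' ha hb fun _ _ => 1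
  simp only [one_mul] at h
  rw [den_eq_expect_expect_den_update G hne X, h]
  simp only [expect_mul_expect]

end Density

theorem stmt_4_general {V : Type*} [Fintype V] {m : ℕ} (H : SimpleGraph (Fin m))
    (a b : Fin m) (hab : H.Adj a b)
    (X : Fin m → Finset V) (hX : ∀ i, (X i).Nonempty)
    (Γ : V → V → ℝ)
    (p γ : ℝ) (hjumb : Jumbled Γ (X a) (X b) p γ)
    (f : V → V → ℝ) (hfsymm : ∀ x y, f x y = f y x)
    (hf01 : ∀ x y, 0 ≤ f x y ∧ f x y ≤ 1) :
    |(∑ x ∈ X a, ∑ y ∈ X b, (Γ x y - p) *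
          den (fun _ _ u v => f u v) (H.deleteEdges {s(a, b)})
            (Function.update (Function.update X a {x}) b {y})) /
        (((X a).card : ℝ) * ((X b).card : ℝ))|
      ≤ γ * Real.sqrt
          (den (fun _ _ u v => f u v) (H.deleteEdges {s(a, b)}) X *
            den (fun _ _ u v => f u v) (H.deleteEdges {e | a ∈ e ∨ b ∈ e}) X) := by
  set H' := H.deleteEdges {s(a, b)}
  set H'' := H.deleteEdges {e | a ∈ e ∨ b ∈ e}
  have hne : a ≠ b := H.ne_of_adj hab
  have hH'ab : ¬H'.Adj a b := by simp [H']
  have hH'' : ∀ i j, H''.Adj i j ↔ H'.Adj i j ∧ i ≠ a ∧ i ≠ b ∧ j ≠ a ∧ j ≠ b := by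
    intro i j
    simp only [H', H'', SimpleGraph.deleteEdges_adj]
    aesop
  rw [← expect_expect_eq_sum_sum_div,
    expect_expect_mul_den_update_eq hfsymm hne hH'ab hH'' (hX a) (hX b),
    den_eq_expect_mul_expect hfsymm hne hH'ab hH'' (hX a) (hX b), den_eq_expect_edgeWeight]
  exact hjumb.abs_expect_mul_le (hX a) (hX b) _
    (fun z x => ⟨starWeight_nonneg (fun x y => (hf01 x y).1) a x z, starWeight_le_one hf01 a x z⟩)
    (fun z y => ⟨starWeight_nonneg (fun x y => (hf01 x y).1) b y z, starWeight_le_one hf01 b y z⟩)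
    fun z _ => edgeWeight_nonneg (fun x y => (hf01 x y).1) z

theorem stmt_4 {V : Type*} [Fintype V] {m : ℕ} (H : SimpleGraph (Fin m))
    (a b : Fin m) (hab : H.Adj a b)
    (X : Fin m → Finset V) (hX : ∀ i, (X i).Nonempty)
    (Γ : V → V → ℝ) (hΓsymm : ∀ x y, Γ x y = Γ y x)
    (hΓ01 : ∀ x y, 0 ≤ Γ x y ∧ Γ x y ≤ 1)
    (p γ : ℝ) (hjumb : Jumbled Γ (X a) (X b) p γ)
    (f : V → V → ℝ) (hfsymm : ∀ x y, f x y = f y x)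
    (hf01 : ∀ x y, 0 ≤ f x y ∧ f x y ≤ 1) :
    |(∑ x ∈ X a, ∑ y ∈ X b, (Γ x y - p) *
          den (fun _ _ u v => f u v) (H.deleteEdges {s(a, b)})
            (Function.update (Function.update X a {x}) b {y})) /
        (((X a).card : ℝ) * ((X b).card : ℝ))|
      ≤ γ * Real.sqrt
          (den (fun _ _ u v => f u v) (H.deleteEdges {s(a, b)}) X *
            den (fun _ _ u v => f u v) (H.deleteEdges {e | a ∈ e ∨ b ∈ e}) X) :=
  stmt_4_general H a b hab X hX Γ p γ hjumb f hfsymm hf01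
end

section
/- Let H be a graph on vertex set {1,…,m} with e(H) edges, and let Γ be a graph with finite nonempty vertex subsets X₁,…,X_m such that for every edge ab of H, the pair (X_a,X_b)_Γ is (p, c p^k √(|X_a||X_b|))-jumbled, where k ≥ (d(L(H)) + 2)/2 and d(L(H)) is the degeneracy of the line graph of H. Then |Γ(H) − p^{e(H)}| ≤ ((1+c)^{e(H)} − 1) p^{e(H)}, where Γ(H) = E_{x₁,…,x_m}[∏_{ab∈E(H)} Γ(x_a,x_b)]. -/
open Classical in
/-- The degeneracy of the line graph of `H`: the maximum over subsets `S` of the edge set of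
the minimum over `e ∈ S` of the number of other edges of `S` sharing an endpoint with `e`. -/
noncomputable def lineGraphDegeneracy {m : ℕ} (H : SimpleGraph (Fin m))
    [DecidableRel H.Adj] : ℕ :=
  H.edgeFinset.powerset.sup fun S =>
    if h : S.Nonempty then
      S.inf' h fun e => (S.filter fun f => f ≠ e ∧ ∃ v, v ∈ e ∧ v ∈ f).card
    else 0

/-!
Induction on the edge set `A ⊆ E(H)`, with each edge oriented `a < b` and `N(A)` the normalised
count of `A` in `Γ`. Degeneracy of `L(H)` supplies an edge `e = ab` with at most `d = d(L(H))`
neighbours. Fixing every vertex but `a` and `b`, `N(A) - p N(A - e)` becomes an average of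
`∑ₓ ∑ᵧ (Γ x y - p) u(x) v(y)`, where `u` and `v` are the products over the edges at `a` and
at `b`; jumbledness bounds each such sum, and Cauchy–Schwarz over the remaining vertices gives
`|N(A) - p N(A - e)| ≤ c p^k √(N(A₁) N(A₂))`, where `A₁`, `A₂` are `A - e` without the edges at `b`,
respectively at `a`. By induction `N(Aᵢ) ≤ ((1 + c) p)^|Aᵢ|`, and since
`|A₁| + |A₂| ≥ 2(|A| - 1) - d ≥ 2|A| - 2k` the error grows by at most `c (1 + c)^(|A|-1) p^|A|`.
-/

open Finset Function

section HomCount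

variable {ι V : Type*}

def homWeight (Γ : V → V → ℝ) (S : Finset (ι × ι)) (z : ι → V) : ℝ :=
  ∏ f ∈ S, Γ (z f.1) (z f.2)

theorem homWeight_nonneg_le_one {Γ : V → V → ℝ} (hΓ : ∀ x y, 0 ≤ Γ x y ∧ Γ x y ≤ 1)
    (S : Finset (ι × ι)) (z : ι → V) : 0 ≤ homWeight Γ S z ∧ homWeight Γ S z ≤ 1 :=
  ⟨prod_nonneg fun _ _ => (hΓ _ _).1, prod_le_one (fun _ _ => (hΓ _ _).1) fun _ _ => (hΓ _ _).2⟩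

section DecidableEq

variable [DecidableEq ι]

theorem homWeight_update_of_forall_ne {Γ : V → V → ℝ} {S : Finset (ι × ι)} {a : ι}
    (hS : ∀ f ∈ S, f.1 ≠ a ∧ f.2 ≠ a) (z : ι → V) (x : V) :
    homWeight Γ S (update z a x) = homWeight Γ S z :=
  prod_congr rfl fun f hf => by rw [update_of_ne (hS f hf).1, update_of_ne (hS f hf).2]

def edgeNeighbors (A : Finset (ι × ι)) (e : ι × ι) : Finset (ι × ι) :=
  {f ∈ A | f ≠ e ∧ (f.1 = e.1 ∨ f.1 = e.2 ∨ f.2 = e.1 ∨ f.2 = e.2)}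

def IsLineDegenerate (A : Finset (ι × ι)) (d : ℕ) : Prop :=
  ∀ B ⊆ A, B.Nonempty → ∃ e ∈ B, #(edgeNeighbors B e) ≤ d

theorem IsLineDegenerate.mono {A B : Finset (ι × ι)} {d : ℕ} (h : IsLineDegenerate A d)
    (hBA : B ⊆ A) : IsLineDegenerate B d :=
  fun C hC => h C (hC.trans hBA)

variable [Fintype ι]

noncomputable def homCount (X : ι → Finset V) (Γ : V → V → ℝ) (S : Finset (ι × ι)) : ℝ :=
  ∑ z ∈ Fintype.piFinset X, homWeight Γ S z

theorem sum_piFinset_sum_update {M : Type*} [AddCommMonoid M] (X : ι → Finset V) (a : ι)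
    (F : (ι → V) → M) :
    ∑ z ∈ Fintype.piFinset X, ∑ x ∈ X a, F (update z a x)
      = #(X a) • ∑ z ∈ Fintype.piFinset X, F z := by
  have hmem : ∀ zx ∈ Fintype.piFinset X ×ˢ X a,
      (update zx.1 a zx.2, zx.1 a) ∈ Fintype.piFinset X ×ˢ X a := by
    rintro ⟨z, x⟩ h
    simp only [mem_product, Fintype.mem_piFinset] at h ⊢
    refine ⟨fun i => ?_, h.1 a⟩
    rcases eq_or_ne i a with rfl | hi
    · simpa using h.2
    · simpa [update_of_ne hi] using h.1 i
  rw [← sum_product', smul_sum]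
  simp_rw [← sum_const]
  rw [← sum_product']
  -- `(z, x) ↦ (update z a x, z a)` is an involution of `piFinset X ×ˢ X a`
  exact sum_nbij' (fun zx => (update zx.1 a zx.2, zx.1 a)) (fun zx => (update zx.1 a zx.2, zx.1 a))
    hmem hmem (fun _ _ => by simp) (fun _ _ => by simp) (fun _ _ => by simp)

theorem sum_piFinset_average_update (X : ι → Finset V) {a : ι} (ha : (X a).Nonempty)
    (F : (ι → V) → ℝ) :
    ∑ z ∈ Fintype.piFinset X, (∑ x ∈ X a, F (update z a x)) / #(X a)
      = ∑ z ∈ Fintype.piFinset X, F z := by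
  rw [← sum_div, sum_piFinset_sum_update, nsmul_eq_mul, mul_div_cancel_left₀]
  exact_mod_cast ha.card_pos.ne'

theorem sum_mul_average_update (X : ι → Finset V) {a : ι} (ha : (X a).Nonempty)
    {f w : (ι → V) → ℝ} (hw : ∀ z x, w (update z a x) = w z) :
    ∑ z ∈ Fintype.piFinset X, w z * ((∑ x ∈ X a, f (update z a x)) / #(X a))
      = ∑ z ∈ Fintype.piFinset X, f z * w z := by
  rw [eq_comm, ← sum_piFinset_average_update X ha]
  refine sum_congr rfl fun z _ => ?_
  simp only [hw, ← sum_mul]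
  ring

theorem Jumbled.abs_sum_sub_mul_le {X : ι → Finset V} {Γ : V → V → ℝ} {p γ : ℝ} {a b : ι}
    (hab : a ≠ b) (ha : (X a).Nonempty) (hb : (X b).Nonempty)
    (hJ : Jumbled Γ (X a) (X b) p γ) (hγ : 0 ≤ γ) {f g w : (ι → V) → ℝ}
    (hf : ∀ z, 0 ≤ f z ∧ f z ≤ 1) (hg : ∀ z, 0 ≤ g z ∧ g z ≤ 1) (hw : ∀ z, 0 ≤ w z)
    (hfb : ∀ z y, f (update z b y) = f z) (hga : ∀ z x, g (update z a x) = g z)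
    (hwa : ∀ z x, w (update z a x) = w z) (hwb : ∀ z y, w (update z b y) = w z) :
    |∑ z ∈ Fintype.piFinset X, (Γ (z a) (z b) - p) * (f z * g z * w z)|
      ≤ γ * √(∑ z ∈ Fintype.piFinset X, f z * w z) * √(∑ z ∈ Fintype.piFinset X, g z * w z) := by
  set na : ℝ := (#(X a) : ℝ)
  set nb : ℝ := (#(X b) : ℝ)
  set fMean : (ι → V) → ℝ := fun z => (∑ x ∈ X a, f (update z a x)) / na
  set gMean : (ι → V) → ℝ := fun z => (∑ y ∈ X b, g (update z b y)) / nb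
  set Δ : (ι → V) → ℝ := fun z =>
    ∑ x ∈ X a, ∑ y ∈ X b, (Γ x y - p) * f (update z a x) * g (update z b y)
  -- averaging over the values at `a` and `b` leaves `w`, which sees neither, outside
  have hsum : ∑ z ∈ Fintype.piFinset X, (Γ (z a) (z b) - p) * (f z * g z * w z)
      = ∑ z ∈ Fintype.piFinset X, w z * (Δ z / (na * nb)) := by
    rw [← sum_piFinset_average_update X hb, ← sum_piFinset_average_update X ha]
    refine sum_congr rfl fun z _ => ?_
    simp only [update_self, update_of_ne hab, hfb, hwb, hwa, Δ, mul_sum, sum_div, div_div]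
    refine sum_congr rfl fun x _ => sum_congr rfl fun y _ => ?_
    rw [update_comm hab, hga]
    ring
  have hMean_nonneg : ∀ z, 0 ≤ fMean z ∧ 0 ≤ gMean z := fun z =>
    ⟨div_nonneg (sum_nonneg fun x _ => (hf _).1) (Nat.cast_nonneg _),
      div_nonneg (sum_nonneg fun y _ => (hg _).1) (Nat.cast_nonneg _)⟩
  calc |∑ z ∈ Fintype.piFinset X, (Γ (z a) (z b) - p) * (f z * g z * w z)|
      ≤ ∑ z ∈ Fintype.piFinset X, w z * |Δ z / (na * nb)| := by
        rw [hsum]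
        refine (abs_sum_le_sum_abs _ _).trans_eq (sum_congr rfl fun z _ => ?_)
        rw [abs_mul, abs_of_nonneg (hw z)]
    _ ≤ ∑ z ∈ Fintype.piFinset X, w z * (γ * √(fMean z) * √(gMean z)) :=
        sum_le_sum fun z _ => mul_le_mul_of_nonneg_left
          (hJ _ _ (fun x => hf _) (fun y => hg _)) (hw z)
    _ = γ * ∑ z ∈ Fintype.piFinset X, √(w z * fMean z) * √(w z * gMean z) := by
        rw [mul_sum]
        refine sum_congr rfl fun z _ => ?_
        rw [Real.sqrt_mul (hw z), Real.sqrt_mul (hw z)]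
        linear_combination (γ * √(fMean z) * √(gMean z)) * (Real.mul_self_sqrt (hw z)).symm
    _ ≤ γ * (√(∑ z ∈ Fintype.piFinset X, w z * fMean z)
          * √(∑ z ∈ Fintype.piFinset X, w z * gMean z)) :=
        mul_le_mul_of_nonneg_left (Real.sum_sqrt_mul_sqrt_le _
          (fun z => mul_nonneg (hw z) (hMean_nonneg z).1)
          (fun z => mul_nonneg (hw z) (hMean_nonneg z).2)) hγ
    _ = _ := by rw [sum_mul_average_update X ha hwa, sum_mul_average_update X hb hwb, mul_assoc]

end DecidableEq

section LinearOrder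

variable [LinearOrder ι]

theorem ne_snd_of_mem_erase {A : Finset (ι × ι)} (hA : ∀ f ∈ A, f.1 < f.2) {e f : ι × ι}
    (he : e ∈ A) (hf : f ∈ A.erase e) (hfe : f.1 = e.1 ∨ f.2 = e.1) : f.1 ≠ e.2 ∧ f.2 ≠ e.2 := by
  obtain ⟨hne, hfA⟩ := mem_erase.1 hf
  have hlt := hA e he
  rcases hfe with h | h
  · exact ⟨h ▸ hlt.ne, fun h' => hne (Prod.ext h h')⟩
  · exact ⟨((hA f hfA).trans (h ▸ hlt)).ne, h ▸ hlt.ne⟩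

theorem injOn_sym2Mk : Set.InjOn (fun f : ι × ι => s(f.1, f.2)) {f | f.1 < f.2} := by
  rintro ⟨a, b⟩ hab ⟨c, d⟩ hcd h
  rcases Sym2.eq_iff.1 h with ⟨rfl, rfl⟩ | ⟨rfl, rfl⟩
  · rfl
  · exact absurd (hab.trans hcd) (lt_irrefl _)

variable [Fintype ι]

theorem exists_abs_homCount_sub_homCount_erase_le {X : ι → Finset V} {Γ : V → V → ℝ}
    (hΓ : ∀ x y, 0 ≤ Γ x y ∧ Γ x y ≤ 1) {p γ : ℝ} (hγ : 0 ≤ γ) {A : Finset (ι × ι)}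
    (hA : ∀ f ∈ A, f.1 < f.2) {e : ι × ι} (he : e ∈ A) (ha : (X e.1).Nonempty)
    (hb : (X e.2).Nonempty) (hJ : Jumbled Γ (X e.1) (X e.2) p γ) :
    ∃ B₁ ⊆ A.erase e, ∃ B₂ ⊆ A.erase e,
      2 * #(A.erase e) ≤ #B₁ + #B₂ + #(edgeNeighbors A e) ∧
      |homCount X Γ A - p * homCount X Γ (A.erase e)|
        ≤ γ * √(homCount X Γ B₁) * √(homCount X Γ B₂) := by
  set A' := A.erase e
  set Sa := {f ∈ A' | f.1 = e.1 ∨ f.2 = e.1}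
  set Ra := {f ∈ A' | ¬(f.1 = e.1 ∨ f.2 = e.1)}
  set Sb := {f ∈ Ra | f.1 = e.2 ∨ f.2 = e.2}
  set R := {f ∈ Ra | ¬(f.1 = e.2 ∨ f.2 = e.2)}
  have hRa : ∀ f ∈ Ra, f.1 ≠ e.1 ∧ f.2 ≠ e.1 := fun f hf => not_or.1 (mem_filter.1 hf).2
  have hR : ∀ f ∈ R, f.1 ≠ e.2 ∧ f.2 ≠ e.2 := fun f hf => not_or.1 (mem_filter.1 hf).2
  have hRRa : R ⊆ Ra := filter_subset _ _
  have hSaR : Disjoint Sa R := (disjoint_filter_filter_not A' A' _).mono_right hRRa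
  refine ⟨Sa ∪ R, union_subset (filter_subset _ _) (hRRa.trans (filter_subset _ _)),
    Ra, filter_subset _ _, ?_, ?_⟩
  · have hSaSb : Disjoint Sa Sb :=
      (disjoint_filter_filter_not A' A' _).mono_right (filter_subset _ _)
    have hneighbors : Sa ∪ Sb ⊆ edgeNeighbors A e := by
      intro f hf
      simp only [edgeNeighbors, mem_union, mem_filter, mem_erase, Sa, Sb, Ra, A'] at hf ⊢
      tauto
    have h₀ := card_le_card hneighbors
    have h₁ : #Sa + #Ra = #A' := card_filter_add_card_filter_not _
    have h₂ : #Sb + #R = #Ra := card_filter_add_card_filter_not _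
    rw [card_union_of_disjoint hSaSb] at h₀
    rw [card_union_of_disjoint hSaR]
    omega
  · have hstep := Jumbled.abs_sum_sub_mul_le (X := X) (hA e he).ne ha hb hJ hγ
      (homWeight_nonneg_le_one hΓ Sa) (homWeight_nonneg_le_one hΓ Sb)
      (fun z => (homWeight_nonneg_le_one hΓ R z).1)
      (homWeight_update_of_forall_ne fun f hf =>
        ne_snd_of_mem_erase hA he (mem_filter.1 hf).1 (mem_filter.1 hf).2)
      (homWeight_update_of_forall_ne fun f hf => hRa f (filter_subset _ _ hf))
      (homWeight_update_of_forall_ne fun f hf => hRa f (hRRa hf))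
      (homWeight_update_of_forall_ne hR)
    have hwA' : ∀ z, homWeight Γ A' z = homWeight Γ Sa z * homWeight Γ Sb z * homWeight Γ R z := by
      intro z
      simp only [homWeight, Sa, Sb, R, Ra, mul_assoc, prod_filter_mul_prod_filter_not]
    have hwA : ∀ z, homWeight Γ A z = Γ (z e.1) (z e.2) * homWeight Γ A' z := fun z =>
      (mul_prod_erase A (fun f => Γ (z f.1) (z f.2)) he).symm
    have hwSaR : ∀ z, homWeight Γ (Sa ∪ R) z = homWeight Γ Sa z * homWeight Γ R z := fun z =>
      prod_union hSaR
    have hwRa : ∀ z, homWeight Γ Ra z = homWeight Γ Sb z * homWeight Γ R z := fun z =>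
      (prod_filter_mul_prod_filter_not _ _ _).symm
    simp only [homCount, hwSaR, hwRa, mul_sum, ← sum_sub_distrib, hwA, hwA']
    convert hstep using 3
    ring

theorem rpow_mul_sqrt_mul_sqrt_le {p c k P N₁ N₂ : ℝ} {n n₁ n₂ d : ℕ} (hp : 0 < p) (hp1 : p ≤ 1)
    (hc : 0 ≤ c) (hP : 0 ≤ P) (hk : (d : ℝ) + 2 ≤ 2 * k) (h₁ : n₁ + n₂ ≤ 2 * n)
    (h₂ : 2 * n ≤ n₁ + n₂ + d) (hN₁ : N₁ ≤ ((1 + c) * p) ^ n₁ * P)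
    (hN₂ : N₂ ≤ ((1 + c) * p) ^ n₂ * P) :
    p ^ k * (√N₁ * √N₂) ≤ (1 + c) ^ n * p ^ (n + 1) * P := by
  have hpk : (p ^ k) ^ 2 ≤ p ^ (d + 2) := by
    rw [← Real.rpow_mul_natCast hp.le, ← Real.rpow_natCast]
    exact Real.rpow_le_rpow_of_exponent_ge hp hp1 (by push_cast; linarith)
  calc p ^ k * (√N₁ * √N₂)
      ≤ p ^ k * (√(((1 + c) * p) ^ n₁ * P) * √(((1 + c) * p) ^ n₂ * P)) := by gcongr
    _ ≤ (1 + c) ^ n * p ^ (n + 1) * P := by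
      refine le_of_pow_le_pow_left₀ two_ne_zero (by positivity) ?_
      rw [mul_pow, mul_pow, Real.sq_sqrt (by positivity), Real.sq_sqrt (by positivity)]
      calc (p ^ k) ^ 2 * (((1 + c) * p) ^ n₁ * P * (((1 + c) * p) ^ n₂ * P))
          ≤ p ^ (d + 2) * ((1 + c) ^ (2 * n) * p ^ (n₁ + n₂) * P ^ 2) := by
            rw [mul_pow, mul_pow]
            gcongr ?_ * ?_
            calc (1 + c) ^ n₁ * p ^ n₁ * P * ((1 + c) ^ n₂ * p ^ n₂ * P)
                = (1 + c) ^ (n₁ + n₂) * p ^ (n₁ + n₂) * P ^ 2 := by ring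
              _ ≤ _ := by gcongr; linarith
        _ = (1 + c) ^ (2 * n) * p ^ (n₁ + n₂ + d + 2) * P ^ 2 := by ring
        _ ≤ (1 + c) ^ (2 * n) * p ^ (2 * n + 2) * P ^ 2 := by
            gcongr _ * ?_ * _
            exact pow_le_pow_of_le_one hp.le hp1 (by omega)
        _ = ((1 + c) ^ n * p ^ (n + 1) * P) ^ 2 := by ring

theorem abs_homCount_sub_le {X : ι → Finset V} (hX : ∀ i, (X i).Nonempty)
    {Γ : V → V → ℝ} (hΓ : ∀ x y, 0 ≤ Γ x y ∧ Γ x y ≤ 1) {p c k : ℝ} {d : ℕ} (hp : 0 < p)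
    (hp1 : p ≤ 1) (hc : 0 < c) (hk : (d : ℝ) + 2 ≤ 2 * k) {A : Finset (ι × ι)}
    (hA : ∀ f ∈ A, f.1 < f.2) (hJ : ∀ f ∈ A, Jumbled Γ (X f.1) (X f.2) p (c * p ^ k))
    (hd : IsLineDegenerate A d) :
    |homCount X Γ A - p ^ #A * ∏ i, (#(X i) : ℝ)|
      ≤ ((1 + c) ^ #A - 1) * p ^ #A * ∏ i, (#(X i) : ℝ) := by
  obtain ⟨P, hPdef, hP⟩ : ∃ P, ∏ i, (#(X i) : ℝ) = P ∧ 0 < P :=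
    ⟨_, rfl, prod_pos fun i _ => Nat.cast_pos.2 (hX i).card_pos⟩
  rw [hPdef]
  induction A using Finset.strongInduction with
  | H A ih =>
  obtain rfl | hAne := A.eq_empty_or_nonempty
  · simp [homCount, homWeight, ← hPdef, Fintype.card_piFinset]
  obtain ⟨e, he, hdeg⟩ := hd A Subset.rfl hAne
  obtain ⟨B₁, hB₁, B₂, hB₂, hcard, hstep⟩ := exists_abs_homCount_sub_homCount_erase_le hΓ
    (mul_nonneg hc.le (Real.rpow_nonneg hp.le k)) hA he (hX _) (hX _) (hJ e he)
  have ih' : ∀ B ⊆ A.erase e,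
      |homCount X Γ B - p ^ #B * P| ≤ ((1 + c) ^ #B - 1) * p ^ #B * P := fun B hB =>
    have hBA : B ⊆ A := hB.trans (erase_subset _ _)
    ih B (hB.trans_ssubset (erase_ssubset he)) (fun f hf => hA f (hBA hf))
      (fun f hf => hJ f (hBA hf)) (hd.mono hBA)
  have hupper : ∀ B ⊆ A.erase e, homCount X Γ B ≤ ((1 + c) * p) ^ #B * P := fun B hB => by
    have := (abs_le.1 (ih' B hB)).2
    rw [mul_pow]
    linarith
  have hsqrt := rpow_mul_sqrt_mul_sqrt_le hp hp1 hc.le hP.le hk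
    ((add_le_add (card_le_card hB₁) (card_le_card hB₂)).trans_eq (two_mul _).symm)
    (hcard.trans (Nat.add_le_add_left hdeg _)) (hupper _ hB₁) (hupper _ hB₂)
  rw [← card_erase_add_one he]
  set n := #(A.erase e)
  calc |homCount X Γ A - p ^ (n + 1) * P|
      ≤ |homCount X Γ A - p * homCount X Γ (A.erase e)|
          + p * |homCount X Γ (A.erase e) - p ^ n * P| := by
        have := abs_sub_le (homCount X Γ A) (p * homCount X Γ (A.erase e)) (p ^ (n + 1) * P)
        rwa [show p * homCount X Γ (A.erase e) - p ^ (n + 1) * P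
          = p * (homCount X Γ (A.erase e) - p ^ n * P) by ring, abs_mul, abs_of_pos hp] at this
    _ ≤ c * (p ^ k * (√(homCount X Γ B₁) * √(homCount X Γ B₂)))
          + p * (((1 + c) ^ n - 1) * p ^ n * P) :=
        add_le_add (hstep.trans_eq (by ring)) (mul_le_mul_of_nonneg_left (ih' _ Subset.rfl) hp.le)
    _ ≤ c * ((1 + c) ^ n * p ^ (n + 1) * P) + p * (((1 + c) ^ n - 1) * p ^ n * P) := by
        gcongr
    _ = ((1 + c) ^ (n + 1) - 1) * p ^ (n + 1) * P := by ring

variable (H : SimpleGraph ι) [DecidableRel H.Adj]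

def edgePairs : Finset (ι × ι) := {f | f.1 < f.2 ∧ H.Adj f.1 f.2}

theorem mem_edgePairs {f : ι × ι} : f ∈ edgePairs H ↔ f.1 < f.2 ∧ H.Adj f.1 f.2 := by
  simp [edgePairs]

theorem card_edgePairs : #(edgePairs H) = #H.edgeFinset := by
  refine card_nbij (fun f : ι × ι => s(f.1, f.2)) (fun f hf => ?_)
    (injOn_sym2Mk.mono fun f hf => ((mem_edgePairs H).1 hf).1) fun e he => ?_
  · simpa using ((mem_edgePairs H).1 hf).2
  · induction e using Sym2.ind with
    | h x y =>
    have hxy : H.Adj x y := by simpa using he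
    rcases hxy.ne.lt_or_gt with h | h
    · exact ⟨(x, y), (mem_edgePairs H).2 ⟨h, hxy⟩, rfl⟩
    · exact ⟨(y, x), (mem_edgePairs H).2 ⟨h, hxy.symm⟩, Sym2.eq_swap⟩

theorem den_eq_homCount_div {V : Type*} [Fintype V] (X : ι → Finset V) (Γ : V → V → ℝ) :
    den (fun _ _ u v => Γ u v) H X = homCount X Γ (edgePairs H) / ∏ i, (#(X i) : ℝ) := by
  unfold den
  congr 1
  refine sum_congr (by congr) fun z _ => ?_
  rw [homWeight, edgePairs, prod_filter, ← univ_product_univ, prod_product]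
  refine prod_congr rfl fun i _ => prod_congr rfl fun j _ => ?_
  by_cases h : i < j ∧ H.Adj i j
  · rw [if_pos h, if_pos h]
  · rw [if_neg h, if_neg h]

end LinearOrder

end HomCount

theorem isLineDegenerate_edgePairs {m : ℕ} (H : SimpleGraph (Fin m)) [DecidableRel H.Adj] :
    IsLineDegenerate (edgePairs H) (lineGraphDegeneracy H) := by
  classical
  intro B hB hBne
  set S := B.image fun f : Fin m × Fin m => s(f.1, f.2)
  have hS : S ⊆ H.edgeFinset := image_subset_iff.2 fun f hf => by
    simpa using ((mem_edgePairs H).1 (hB hf)).2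
  have hSne : S.Nonempty := hBne.image _
  have hsup := le_sup (f := fun S => if h : S.Nonempty then
      S.inf' h fun e => #{f ∈ S | f ≠ e ∧ ∃ v, v ∈ e ∧ v ∈ f} else 0) (mem_powerset.2 hS)
  obtain ⟨e₀, he₀, hmin⟩ := exists_mem_eq_inf' hSne
    fun e => #{f ∈ S | f ≠ e ∧ ∃ v, v ∈ e ∧ v ∈ f}
  obtain ⟨e, he, rfl⟩ := mem_image.1 he₀
  simp only [dif_pos hSne, hmin] at hsup
  refine ⟨e, he, le_trans (card_le_card_of_injOn (fun f : Fin m × Fin m => s(f.1, f.2))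
    (fun f hf => ?_) ?_) hsup⟩
  · obtain ⟨hfB, hfe, hshare⟩ := mem_filter.1 hf
    refine mem_filter.2 ⟨mem_image_of_mem _ hfB, fun h => hfe (injOn_sym2Mk
      ((mem_edgePairs H).1 (hB hfB)).1 ((mem_edgePairs H).1 (hB he)).1 h), ?_⟩
    rcases hshare with h | h | h | h <;> simp [Sym2.mem_iff, h]
  · exact injOn_sym2Mk.mono fun f hf => ((mem_edgePairs H).1 (hB (mem_filter.1 hf).1)).1

theorem stmt_5_general {V : Type*} [Fintype V] {m : ℕ} (H : SimpleGraph (Fin m))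
    [DecidableRel H.Adj]
    (X : Fin m → Finset V) (hX : ∀ i, (X i).Nonempty)
    (Γ : V → V → ℝ)
    (hΓ01 : ∀ x y, Γ x y = 0 ∨ Γ x y = 1)
    (p c k : ℝ) (hp : 0 < p) (hp1 : p ≤ 1) (hc : 0 < c)
    (hdeg : (lineGraphDegeneracy H : ℝ) + 2 ≤ 2 * k)
    (hjumb : ∀ i j, H.Adj i j → Jumbled Γ (X i) (X j) p (c * p ^ k)) :
    |den (fun _ _ u v => Γ u v) H X - p ^ H.edgeFinset.card|
      ≤ ((1 + c) ^ H.edgeFinset.card - 1) * p ^ H.edgeFinset.card := by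
  have hΓ : ∀ x y, 0 ≤ Γ x y ∧ Γ x y ≤ 1 := fun x y => by
    rcases hΓ01 x y with h | h <;> simp [h]
  have hcount := abs_homCount_sub_le hX hΓ hp hp1 hc hdeg
    (fun f hf => ((mem_edgePairs H).1 hf).1) (fun f hf => hjumb _ _ ((mem_edgePairs H).1 hf).2)
    (isLineDegenerate_edgePairs H)
  have hP : 0 < ∏ i, (#(X i) : ℝ) := prod_pos fun i _ => Nat.cast_pos.2 (hX i).card_pos
  rw [den_eq_homCount_div, ← card_edgePairs, div_sub' hP.ne', abs_div, abs_of_pos hP,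
    div_le_iff₀ hP]
  simpa only [mul_comm] using hcount

theorem stmt_5 {V : Type*} [Fintype V] {m : ℕ} (H : SimpleGraph (Fin m))
    [DecidableRel H.Adj]
    (X : Fin m → Finset V) (hX : ∀ i, (X i).Nonempty)
    (Γ : V → V → ℝ) (hΓsymm : ∀ x y, Γ x y = Γ y x)
    (hΓ01 : ∀ x y, Γ x y = 0 ∨ Γ x y = 1)
    (p c k : ℝ) (hp : 0 < p) (hp1 : p ≤ 1) (hc : 0 < c) (hc1 : c ≤ 1) (hk : 1 ≤ k)
    (hdeg : (lineGraphDegeneracy H : ℝ) + 2 ≤ 2 * k)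
    (hjumb : ∀ i j, H.Adj i j → Jumbled Γ (X i) (X j) p (c * p ^ k)) :
    |den (fun _ _ u v => Γ u v) H X - p ^ H.edgeFinset.card|
      ≤ ((1 + c) ^ H.edgeFinset.card - 1) * p ^ H.edgeFinset.card :=
  stmt_5_general H X hX Γ hΓ01 p c k hp hp1 hc hdeg hjumb
end

section
/- Let G be a weighted graph with finite nonempty vertex subsets X, Y, Z; let 0 ≤ q₁ ≤ p₁ ≤ 1, 0 ≤ q₂ ≤ 1, ε > 0. Suppose (X,Y)_G satisfies DISC(q₁, p₁, ε) and (Y,Z)_G satisfies DISC(q₂, 1, ε). Then the weighted bipartite graph G' on X × Z defined by G'(x,z) = E_{y∈Y}[G(x,y)G(y,z)] satisfies DISC(q₁q₂, p₁, 2ε). -/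
/-- The discrepancy condition `DISC(q, p, ε)` for a weighted bipartite graph `G : X × Y → ℝ`. -/
def DISC {X Y : Type*} [Fintype X] [Fintype Y] (G : X → Y → ℝ) (q p ε : ℝ) : Prop :=
  ∀ u : X → ℝ, ∀ v : Y → ℝ, (∀ x, 0 ≤ u x ∧ u x ≤ 1) → (∀ y, 0 ≤ v y ∧ v y ≤ 1) →
    |(∑ x : X, ∑ y : Y, (G x y - q) * u x * v y) /
        ((Fintype.card X : ℝ) * (Fintype.card Y : ℝ))| ≤ ε * p

theorem stmt_7 {X Y Z : Type*} [Fintype X] [Fintype Y] [Fintype Z]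
    [Nonempty X] [Nonempty Y] [Nonempty Z]
    (GXY : X → Y → ℝ) (GYZ : Y → Z → ℝ)
    (hXY01 : ∀ x y, 0 ≤ GXY x y ∧ GXY x y ≤ 1)
    (hYZ01 : ∀ y z, 0 ≤ GYZ y z ∧ GYZ y z ≤ 1)
    (q₁ p₁ q₂ ε : ℝ) (hq₁0 : 0 ≤ q₁) (hq₁p₁ : q₁ ≤ p₁) (hp₁1 : p₁ ≤ 1)
    (hq₂0 : 0 ≤ q₂) (hq₂1 : q₂ ≤ 1) (hε : 0 < ε)
    (hd1 : DISC GXY q₁ p₁ ε) (hd2 : DISC GYZ q₂ 1 ε) :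
    DISC (fun x z => (∑ y : Y, GXY x y * GYZ y z) / (Fintype.card Y : ℝ))
      (q₁ * q₂) p₁ (2 * ε) := by
  intro u v hu hv
  have hnX : (0:ℝ) < (Fintype.card X : ℝ) := by exact_mod_cast Fintype.card_pos
  have hnY : (0:ℝ) < (Fintype.card Y : ℝ) := by exact_mod_cast Fintype.card_pos
  have hnZ : (0:ℝ) < (Fintype.card Z : ℝ) := by exact_mod_cast Fintype.card_pos
  set nX := (Fintype.card X : ℝ) with hnXdef
  set nY := (Fintype.card Y : ℝ) with hnYdef
  set nZ := (Fintype.card Z : ℝ) with hnZdef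
  set S := ∑ z : Z, ∑ x : X, ∑ y : Y, (GXY x y - q₁) * u x * (GYZ y z * v z) with hSdef
  set T := ∑ y : Y, ∑ z : Z, (GYZ y z - q₂) * v z with hTdef
  set U := ∑ x : X, u x with hUdef
  -- bound on S from hd1
  have hAz : ∀ z : Z, |∑ x : X, ∑ y : Y, (GXY x y - q₁) * u x * (GYZ y z * v z)|
      ≤ ε * p₁ * (nX * nY) := by
    intro z
    have := hd1 u (fun y => GYZ y z * v z) hu (fun y =>
      ⟨mul_nonneg (hYZ01 y z).1 (hv z).1,
       mul_le_one₀ (hYZ01 y z).2 (hv z).1 (hv z).2⟩)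
    rw [abs_div, abs_of_pos (mul_pos hnX hnY), div_le_iff₀ (mul_pos hnX hnY)] at this
    exact this
  have hS : |S| ≤ nZ * (ε * p₁ * (nX * nY)) := by
    calc |S| ≤ ∑ z : Z, |∑ x : X, ∑ y : Y, (GXY x y - q₁) * u x * (GYZ y z * v z)| :=
          Finset.abs_sum_le_sum_abs _ _
      _ ≤ ∑ _z : Z, (ε * p₁ * (nX * nY)) := Finset.sum_le_sum fun z _ => hAz z
      _ = nZ * (ε * p₁ * (nX * nY)) := by
          rw [Finset.sum_const, Finset.card_univ, nsmul_eq_mul]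
  -- bound on T from hd2
  have hT : |T| ≤ ε * (nY * nZ) := by
    have := hd2 (fun _ => 1) v (fun _ => ⟨zero_le_one, le_refl 1⟩) hv
    simp only [mul_one] at this
    rw [abs_div, abs_of_pos (mul_pos hnY hnZ), div_le_iff₀ (mul_pos hnY hnZ)] at this
    simpa [hTdef] using this
  have hU0 : 0 ≤ U := Finset.sum_nonneg fun x _ => (hu x).1
  have hU1 : U ≤ nX := by
    calc U ≤ ∑ _x : X, (1:ℝ) := Finset.sum_le_sum fun x _ => (hu x).2
      _ = nX := by rw [Finset.sum_const, Finset.card_univ, nsmul_eq_mul, mul_one]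
  -- the algebraic identity
  have hEq : (∑ x : X, ∑ z : Z,
        ((∑ y : Y, GXY x y * GYZ y z) / nY - q₁ * q₂) * u x * v z) / (nX * nZ)
      = S / (nX * nY * nZ) + q₁ * U * T / (nX * nY * nZ) := by
    have key : ∀ x z, ((∑ y : Y, GXY x y * GYZ y z) / nY - q₁ * q₂) * u x * v z
        = (∑ y : Y, ((GXY x y - q₁) * u x * (GYZ y z * v z)
            + q₁ * ((GYZ y z - q₂) * u x * v z))) / nY := by
      intro x z
      have h1 : ∀ y : Y, (GXY x y - q₁) * u x * (GYZ y z * v z)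
          + q₁ * ((GYZ y z - q₂) * u x * v z)
          = GXY x y * GYZ y z * (u x * v z) - q₁ * q₂ * (u x * v z) := by
        intro y; ring
      rw [Finset.sum_congr rfl fun y _ => h1 y, Finset.sum_sub_distrib,
        Finset.sum_const, Finset.card_univ, ← Finset.sum_mul, nsmul_eq_mul]
      field_simp
      ring
    rw [Finset.sum_congr rfl fun x _ => Finset.sum_congr rfl fun z _ => key x z]
    simp only [← Finset.sum_div]
    rw [div_div, show nY * (nX * nZ) = nX * nY * nZ from by ring]
    have split : ∑ x : X, ∑ z : Z, ∑ y : Y,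
        ((GXY x y - q₁) * u x * (GYZ y z * v z) + q₁ * ((GYZ y z - q₂) * u x * v z))
        = S + q₁ * U * T := by
      simp only [Finset.sum_add_distrib]
      congr 1
      · exact Finset.sum_comm
      · have h2 : ∀ x : X, ∑ z : Z, ∑ y : Y, q₁ * ((GYZ y z - q₂) * u x * v z)
            = u x * (q₁ * ∑ z : Z, ∑ y : Y, (GYZ y z - q₂) * v z) := by
          intro x
          rw [Finset.mul_sum, Finset.mul_sum]
          refine Finset.sum_congr rfl fun z _ => ?_
          rw [Finset.mul_sum, Finset.mul_sum]
          exact Finset.sum_congr rfl fun y _ => by ring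
        rw [Finset.sum_congr rfl fun x _ => h2 x, ← Finset.sum_mul]
        rw [show (∑ z : Z, ∑ y : Y, (GYZ y z - q₂) * v z) = T from Finset.sum_comm]
        ring
    rw [split, add_div]
  -- final bound
  have hD : (0:ℝ) < nX * nY * nZ := by positivity
  have h1 : |S / (nX * nY * nZ)| ≤ ε * p₁ := by
    rw [abs_div, abs_of_pos hD, div_le_iff₀ hD]
    calc |S| ≤ nZ * (ε * p₁ * (nX * nY)) := hS
      _ = ε * p₁ * (nX * nY * nZ) := by ring
  have h2 : |q₁ * U * T / (nX * nY * nZ)| ≤ ε * p₁ := by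
    rw [abs_div, abs_of_pos hD, div_le_iff₀ hD]
    have : |q₁ * U * T| = q₁ * U * |T| := by
      rw [abs_mul, abs_of_nonneg (mul_nonneg hq₁0 hU0)]
    rw [this]
    calc q₁ * U * |T| ≤ q₁ * nX * (ε * (nY * nZ)) := by
          have hq1 : q₁ * U ≤ q₁ * nX := mul_le_mul_of_nonneg_left hU1 hq₁0
          have hT0 : (0:ℝ) ≤ |T| := abs_nonneg _
          have hεnn : (0:ℝ) ≤ ε * (nY * nZ) := by positivity
          calc q₁ * U * |T| ≤ q₁ * nX * |T| :=
                mul_le_mul_of_nonneg_right hq1 hT0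
            _ ≤ q₁ * nX * (ε * (nY * nZ)) :=
                mul_le_mul_of_nonneg_left hT (by positivity)
      _ ≤ p₁ * nX * (ε * (nY * nZ)) := by
          have h3 := mul_le_mul_of_nonneg_right hq₁p₁ hnX.le
          exact mul_le_mul_of_nonneg_right h3 (by positivity)
      _ = ε * p₁ * (nX * nY * nZ) := by ring
  calc |(∑ x : X, ∑ z : Z,
        ((∑ y : Y, GXY x y * GYZ y z) / nY - q₁ * q₂) * u x * v z) / (nX * nZ)|
      = |S / (nX * nY * nZ) + q₁ * U * T / (nX * nY * nZ)| := by rw [hEq]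
    _ ≤ |S / (nX * nY * nZ)| + |q₁ * U * T / (nX * nY * nZ)| := abs_add_le _ _
    _ ≤ ε * p₁ + ε * p₁ := add_le_add h1 h2
    _ = 2 * ε * p₁ := by ring
end

section
/- Let G be a weighted graph with finite nonempty vertex subsets X, Y, Z, let p₁, p₂, ε ∈ (0,1], q₁ ∈ [0,p₁], q₂ ∈ [0,p₂]. Suppose (X,Y)_G satisfies DISC_≥(q₁, p₁, ε) and (Y,Z)_G satisfies DISC_≥(q₂, p₂, ε). Then the weighted bipartite graph G' on X × Z defined by G'(x,z) = E_{y∈Y}[G(x,y)G(y,z)] satisfies DISC_≥(q₁q₂, p₁p₂, 6√ε). -/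
/-!
Put `α y = ∑ x, G x y * u x` and `β y = ∑ z, G y z * v z`; the discrepancy sum of `G'` is
`(∑ y, α y * β y) / |Y| - q₁ q₂ (∑ u) (∑ v)`. Testing `DISC_≥(q₁, p₁, ε)` against the weight
`w ∝ (q₁ ∑ u - α)⁺` bounds `∑ y, (q₁ ∑ u - α y)⁺ ^ 2` by `ε p₁ (q₁ ∑ u) |X| |Y|`, and
Cauchy–Schwarz turns that into `∑ y, (q₁ ∑ u - α y)⁺ ≤ √ε p₁ |X| |Y|`; symmetrically for `β`.
Since `α β ≥ c d - c (d - β)⁺ - d (c - α)⁺` for `c = q₁ ∑ u`, `d = q₂ ∑ v`, the product sum falls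
short of `|Y| c d` by at most `2 √ε p₁ p₂ |X| |Y| |Z|`.
-/

/-- The one-sided discrepancy condition `DISC_≥(q, p, ε)` for a weighted bipartite graph
`G : X × Y → ℝ`. -/
def DISCge {X Y : Type*} [Fintype X] [Fintype Y] (G : X → Y → ℝ) (q p ε : ℝ) : Prop :=
  ∀ u : X → ℝ, ∀ v : Y → ℝ, (∀ x, 0 ≤ u x ∧ u x ≤ 1) → (∀ y, 0 ≤ v y ∧ v y ≤ 1) →
    -(ε * p) ≤ (∑ x : X, ∑ y : Y, (G x y - q) * u x * v y) /
        ((Fintype.card X : ℝ) * (Fintype.card Y : ℝ))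

open Finset Fintype

theorem posPart_mul_self_eq {α : Type*} [Ring α] [LinearOrder α] (x : α) :
    x⁺ * x = x⁺ ^ 2 := by
  rcases le_total x 0 with h | h
  · simp [posPart_eq_zero.2 h]
  · rw [posPart_eq_self.2 h, sq]

theorem mul_sum_le_mul_card {A : Type*} [Fintype A] {u : A → ℝ}
    (hu : ∀ a, 0 ≤ u a ∧ u a ≤ 1) {q p : ℝ} (hq : 0 ≤ q) (hqp : q ≤ p) :
    q * ∑ a, u a ≤ p * card A :=
  mul_le_mul hqp (by simpa using Finset.sum_le_card_nsmul univ u 1 fun a _ => (hu a).2)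
    (Finset.sum_nonneg fun a _ => (hu a).1) (hq.trans hqp)

theorem sum_sq_posPart_sub_le {B : Type*} [Fintype B] (a : B → ℝ) {c D : ℝ}
    (ha : ∀ b, 0 ≤ a b) (hc : 0 ≤ c)
    (h : ∀ w : B → ℝ, (∀ b, 0 ≤ w b ∧ w b ≤ 1) → -D ≤ ∑ b, w b * (a b - c)) :
    ∑ b, (c - a b)⁺ ^ 2 ≤ D * c := by
  rcases hc.eq_or_lt with rfl | hc
  · simp [posPart_eq_zero.2 (neg_nonpos.2 (ha _))]
  have hw : ∀ b, 0 ≤ (c - a b)⁺ / c ∧ (c - a b)⁺ / c ≤ 1 := fun b =>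
    ⟨div_nonneg (posPart_nonneg _) hc.le,
      (div_le_one hc).2 (sup_le (by linarith [ha b]) hc.le)⟩
  have key := h _ hw
  simp only [div_mul_eq_mul_div, ← neg_sub c, mul_neg, posPart_mul_self_eq,
    Finset.sum_neg_distrib, ← Finset.sum_div, neg_le_neg_iff] at key
  exact (div_le_iff₀ hc).1 key

theorem DISCge.le_sum {X Y : Type*} [Fintype X] [Fintype Y] {G : X → Y → ℝ} {q p ε : ℝ}
    (h : DISCge G q p ε) {u : X → ℝ} {v : Y → ℝ} (hu : ∀ x, 0 ≤ u x ∧ u x ≤ 1)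
    (hv : ∀ y, 0 ≤ v y ∧ v y ≤ 1) :
    -(ε * p) * (card X * card Y) ≤ ∑ x, ∑ y, (G x y - q) * u x * v y := by
  cases isEmpty_or_nonempty X
  · simp
  cases isEmpty_or_nonempty Y
  · simp
  exact (le_div_iff₀ (by positivity)).1 (h u v hu hv)

theorem DISCge.of_le_sum {X Y : Type*} [Fintype X] [Fintype Y] {G : X → Y → ℝ} {q p ε : ℝ}
    (hεp : 0 ≤ ε * p)
    (h : ∀ (u : X → ℝ) (v : Y → ℝ), (∀ x, 0 ≤ u x ∧ u x ≤ 1) → (∀ y, 0 ≤ v y ∧ v y ≤ 1) →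
      -(ε * p) * (card X * card Y) ≤ ∑ x, ∑ y, (G x y - q) * u x * v y) :
    DISCge G q p ε := by
  intro u v hu hv
  rcases (by positivity : (0 : ℝ) ≤ card X * card Y).eq_or_lt with h0 | h0
  · rw [← h0, div_zero]
    linarith
  · exact (le_div_iff₀ h0).2 (h u v hu hv)

theorem DISCge.flip {X Y : Type*} [Fintype X] [Fintype Y] {G : X → Y → ℝ} {q p ε : ℝ}
    (h : DISCge G q p ε) : DISCge (flip G) q p ε := by
  intro u v hu hv
  convert h v u hv hu using 2
  · rw [Finset.sum_comm]
    simp only [Function.flip_def, mul_right_comm]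
  · ring

theorem DISCge.sum_posPart_le {A B : Type*} [Fintype A] [Fintype B] {G : A → B → ℝ}
    {q p ε : ℝ} (h : DISCge G q p ε) (hG : ∀ a b, 0 ≤ G a b) (hq : 0 ≤ q) (hqp : q ≤ p)
    (hε : 0 ≤ ε) {u : A → ℝ} (hu : ∀ a, 0 ≤ u a ∧ u a ≤ 1) :
    ∑ b, (q * ∑ a, u a - ∑ a, G a b * u a)⁺ ≤ √ε * p * card A * card B := by
  have hp : 0 ≤ p := hq.trans hqp
  have hU0 : 0 ≤ ∑ a, u a := Finset.sum_nonneg fun a _ => (hu a).1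
  have hsq := sum_sq_posPart_sub_le (fun b => ∑ a, G a b * u a) (D := ε * p * (card A * card B))
    (fun b => Finset.sum_nonneg fun a _ => mul_nonneg (hG a b) (hu a).1) (mul_nonneg hq hU0)
    fun w hw => by
      calc -(ε * p * (card A * card B)) ≤ ∑ a, ∑ b, (G a b - q) * u a * w b := by
            simpa only [neg_mul] using h.le_sum hu hw
        _ = ∑ b, w b * (∑ a, G a b * u a - q * ∑ a, u a) := by
            rw [Finset.sum_comm]
            refine Finset.sum_congr rfl fun b _ => ?_
            rw [Finset.mul_sum, ← Finset.sum_sub_distrib, Finset.mul_sum]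
            exact Finset.sum_congr rfl fun a _ => by ring
  refine le_of_pow_le_pow_left₀ two_ne_zero (by positivity) ?_
  calc (∑ b, (q * ∑ a, u a - ∑ a, G a b * u a)⁺) ^ 2
      ≤ card B * (ε * p * (card A * card B) * (q * ∑ a, u a)) := by
        simpa using sq_sum_le_card_mul_sum_sq.trans
          (mul_le_mul_of_nonneg_left hsq (Nat.cast_nonneg (card B)))
    _ ≤ card B * (ε * p * (card A * card B) * (p * card A)) := by
        gcongr _ * (_ * ?_)
        exact mul_sum_le_mul_card hu hq hqp
    _ = (√ε * p * card A * card B) ^ 2 := by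
        rw [mul_pow, mul_pow, mul_pow, Real.sq_sqrt hε]
        ring

theorem mul_sub_mul_posPart_le {a b c d : ℝ} (ha : 0 ≤ a) (hb : 0 ≤ b) (hd : 0 ≤ d) :
    c * d - c * (d - b)⁺ - d * (c - a)⁺ ≤ a * b := by
  have hm : c - a ≤ (c - a)⁺ := le_posPart _
  have hn : d - b ≤ (d - b)⁺ := le_posPart _
  have hn' : (d - b)⁺ ≤ d := sup_le (by linarith) hd
  nlinarith [mul_le_mul (by linarith : c - (c - a)⁺ ≤ a) (by linarith : d - (d - b)⁺ ≤ b)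
    (by linarith) ha, mul_nonneg (posPart_nonneg (c - a)) (posPart_nonneg (d - b))]

theorem card_mul_sub_le_sum_mul {Y : Type*} [Fintype Y] {a b : Y → ℝ} {c d : ℝ}
    (ha : ∀ y, 0 ≤ a y) (hb : ∀ y, 0 ≤ b y) (hd : 0 ≤ d) :
    card Y * (c * d) - c * ∑ y, (d - b y)⁺ - d * ∑ y, (c - a y)⁺ ≤ ∑ y, a y * b y := by
  calc card Y * (c * d) - c * ∑ y, (d - b y)⁺ - d * ∑ y, (c - a y)⁺
      = ∑ y, (c * d - c * (d - b y)⁺ - d * (c - a y)⁺) := by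
        simp [Finset.sum_sub_distrib, Finset.mul_sum]
    _ ≤ ∑ y, a y * b y := Finset.sum_le_sum fun y _ => mul_sub_mul_posPart_le (ha y) (hb y) hd

theorem sum_sum_comp_sub_mul_mul {X Y Z : Type*} [Fintype X] [Fintype Y] [Fintype Z]
    (G : X → Y → ℝ) (H : Y → Z → ℝ) (s r : ℝ) (u : X → ℝ) (v : Z → ℝ) :
    ∑ x, ∑ z, ((∑ y, G x y * H y z) / s - r) * u x * v z =
      (∑ y, (∑ x, G x y * u x) * ∑ z, H y z * v z) / s - r * (∑ x, u x) * ∑ z, v z := by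
  simp only [sub_mul, Finset.sum_sub_distrib, Finset.sum_div, Finset.sum_mul, Finset.mul_sum]
  congr 1
  · rw [Finset.sum_comm]
    conv_rhs => rw [Finset.sum_comm]
    refine Finset.sum_congr rfl fun z _ => ?_
    rw [Finset.sum_comm]
    exact Finset.sum_congr rfl fun y _ => Finset.sum_congr rfl fun x _ => by ring
  · exact Finset.sum_comm

theorem DISCge.le_sum_mul_sum {X Y Z : Type*} [Fintype X] [Fintype Y] [Fintype Z]
    {G : X → Y → ℝ} {H : Y → Z → ℝ} {q₁ q₂ p₁ p₂ ε : ℝ}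
    (hG : DISCge G q₁ p₁ ε) (hH : DISCge H q₂ p₂ ε)
    (hG0 : ∀ x y, 0 ≤ G x y) (hH0 : ∀ y z, 0 ≤ H y z) (hε : 0 ≤ ε)
    (hq₁ : 0 ≤ q₁) (hqp₁ : q₁ ≤ p₁) (hq₂ : 0 ≤ q₂) (hqp₂ : q₂ ≤ p₂)
    {u : X → ℝ} {v : Z → ℝ} (hu : ∀ x, 0 ≤ u x ∧ u x ≤ 1) (hv : ∀ z, 0 ≤ v z ∧ v z ≤ 1) :
    card Y * ((q₁ * ∑ x, u x) * (q₂ * ∑ z, v z)) -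
        2 * (√ε * p₁ * p₂ * card X * card Y * card Z) ≤
      ∑ y, (∑ x, G x y * u x) * ∑ z, H y z * v z := by
  have hm := hG.sum_posPart_le hG0 hq₁ hqp₁ hε hu
  have hn := hH.flip.sum_posPart_le (fun z y => hH0 y z) hq₂ hqp₂ hε hv
  simp only [Function.flip_def] at hn
  have hmn := card_mul_sub_le_sum_mul (a := fun y => ∑ x, G x y * u x)
    (b := fun y => ∑ z, H y z * v z) (c := q₁ * ∑ x, u x) (d := q₂ * ∑ z, v z)
    (fun y => Finset.sum_nonneg fun x _ => mul_nonneg (hG0 x y) (hu x).1)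
    (fun y => Finset.sum_nonneg fun z _ => mul_nonneg (hH0 y z) (hv z).1)
    (mul_nonneg hq₂ (Finset.sum_nonneg fun z _ => (hv z).1))
  have hp₁ : 0 ≤ p₁ := hq₁.trans hqp₁
  have hp₂ : 0 ≤ p₂ := hq₂.trans hqp₂
  have hn' := mul_le_mul (mul_sum_le_mul_card hu hq₁ hqp₁) hn
    (Finset.sum_nonneg fun _ _ => posPart_nonneg _) (by positivity)
  have hm' := mul_le_mul (mul_sum_le_mul_card hv hq₂ hqp₂) hm
    (Finset.sum_nonneg fun _ _ => posPart_nonneg _) (by positivity)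
  linarith

theorem stmt_8_general {X Y Z : Type*} [Fintype X] [Fintype Y] [Fintype Z]
    [Nonempty Y]
    (GXY : X → Y → ℝ) (GYZ : Y → Z → ℝ)
    (hXY01 : ∀ x y, 0 ≤ GXY x y ∧ GXY x y ≤ 1)
    (hYZ01 : ∀ y z, 0 ≤ GYZ y z ∧ GYZ y z ≤ 1)
    (p₁ p₂ ε q₁ q₂ : ℝ)
    (hε : 0 < ε) (hq₁0 : 0 ≤ q₁) (hq₁ : q₁ ≤ p₁) (hq₂0 : 0 ≤ q₂) (hq₂ : q₂ ≤ p₂)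
    (hd1 : DISCge GXY q₁ p₁ ε) (hd2 : DISCge GYZ q₂ p₂ ε) :
    DISCge (fun x z => (∑ y : Y, GXY x y * GYZ y z) / (Fintype.card Y : ℝ))
      (q₁ * q₂) (p₁ * p₂) (6 * Real.sqrt ε) := by
  have hp₁ : 0 ≤ p₁ := hq₁0.trans hq₁
  have hp₂ : 0 ≤ p₂ := hq₂0.trans hq₂
  refine DISCge.of_le_sum (by positivity) fun u v hu hv => ?_
  have hS := hd1.le_sum_mul_sum hd2 (fun x y => (hXY01 x y).1) (fun y z => (hYZ01 y z).1)
    hε.le hq₁0 hq₁ hq₂0 hq₂ hu hv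
  have : 0 ≤ √ε * p₁ * p₂ * card X * card Y * card Z := by positivity
  rw [sum_sum_comp_sub_mul_mul, le_sub_iff_add_le, le_div_iff₀ (by positivity)]
  linarith

theorem stmt_8 {X Y Z : Type*} [Fintype X] [Fintype Y] [Fintype Z]
    [Nonempty X] [Nonempty Y] [Nonempty Z]
    (GXY : X → Y → ℝ) (GYZ : Y → Z → ℝ)
    (hXY01 : ∀ x y, 0 ≤ GXY x y ∧ GXY x y ≤ 1)
    (hYZ01 : ∀ y z, 0 ≤ GYZ y z ∧ GYZ y z ≤ 1)
    (p₁ p₂ ε q₁ q₂ : ℝ) (hp₁ : 0 < p₁) (hp₁1 : p₁ ≤ 1) (hp₂ : 0 < p₂) (hp₂1 : p₂ ≤ 1)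
    (hε : 0 < ε) (hε1 : ε ≤ 1) (hq₁0 : 0 ≤ q₁) (hq₁ : q₁ ≤ p₁) (hq₂0 : 0 ≤ q₂) (hq₂ : q₂ ≤ p₂)
    (hd1 : DISCge GXY q₁ p₁ ε) (hd2 : DISCge GYZ q₂ p₂ ε) :
    DISCge (fun x z => (∑ y : Y, GXY x y * GYZ y z) / (Fintype.card Y : ℝ))
      (q₁ * q₂) (p₁ * p₂) (6 * Real.sqrt ε) :=
  stmt_8_general GXY GYZ hXY01 hYZ01 p₁ p₂ ε q₁ q₂ hε hq₁0 hq₁ hq₂0 hq₂ hd1 hd2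
end

section
/- Let K₃ be the triangle on vertices {1,2,3}. Let G be a weighted graph with finite nonempty vertex subsets X₁, X₂, X₃ such that for all i ≠ j, (X_i, X_j)_G satisfies DISC_≥(q_{ij}, p_{ij}, ε), where p_{13} = p_{23} = 1, 0 ≤ p_{12} ≤ 1, and 0 ≤ q_{ij} ≤ p_{ij}. Then G(K₃) = E_{x₁,x₂,x₃}[G(x₁,x₂)G(x₁,x₃)G(x₂,x₃)] ≥ q_{12}q_{13}q_{23} − 3ε p_{12}. -/
theorem stmt_9 {X₁ X₂ X₃ : Type*} [Fintype X₁] [Fintype X₂] [Fintype X₃]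
    [Nonempty X₁] [Nonempty X₂] [Nonempty X₃]
    (G₁₂ : X₁ → X₂ → ℝ) (G₁₃ : X₁ → X₃ → ℝ) (G₂₃ : X₂ → X₃ → ℝ)
    (h12 : ∀ x y, 0 ≤ G₁₂ x y ∧ G₁₂ x y ≤ 1)
    (h13 : ∀ x z, 0 ≤ G₁₃ x z ∧ G₁₃ x z ≤ 1)
    (h23 : ∀ y z, 0 ≤ G₂₃ y z ∧ G₂₃ y z ≤ 1)
    (q₁₂ q₁₃ q₂₃ p₁₂ ε : ℝ) (hε : 0 < ε)
    (hp₁₂0 : 0 ≤ p₁₂) (hp₁₂1 : p₁₂ ≤ 1)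
    (hq₁₂ : 0 ≤ q₁₂ ∧ q₁₂ ≤ p₁₂) (hq₁₃ : 0 ≤ q₁₃ ∧ q₁₃ ≤ 1) (hq₂₃ : 0 ≤ q₂₃ ∧ q₂₃ ≤ 1)
    (hd12 : DISCge G₁₂ q₁₂ p₁₂ ε) (hd13 : DISCge G₁₃ q₁₃ 1 ε) (hd23 : DISCge G₂₃ q₂₃ 1 ε) :
    q₁₂ * q₁₃ * q₂₃ - 3 * ε * p₁₂
      ≤ (∑ x : X₁, ∑ y : X₂, ∑ z : X₃, G₁₂ x y * G₁₃ x z * G₂₃ y z) /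
          ((Fintype.card X₁ : ℝ) * (Fintype.card X₂ : ℝ) * (Fintype.card X₃ : ℝ)) := by
  classical
  have hn₁p : (0:ℝ) < (Fintype.card X₁ : ℝ) := by
    exact_mod_cast Fintype.card_pos
  have hn₂p : (0:ℝ) < (Fintype.card X₂ : ℝ) := by
    exact_mod_cast Fintype.card_pos
  have hn₃p : (0:ℝ) < (Fintype.card X₃ : ℝ) := by
    exact_mod_cast Fintype.card_pos
  set n₁ : ℝ := (Fintype.card X₁ : ℝ) with hn₁
  set n₂ : ℝ := (Fintype.card X₂ : ℝ) with hn₂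
  set n₃ : ℝ := (Fintype.card X₃ : ℝ) with hn₃
  -- Bound A
  have hA : -(ε * p₁₂) * (n₁ * n₂ * n₃)
      ≤ ∑ z : X₃, ∑ x : X₁, ∑ y : X₂, (G₁₂ x y - q₁₂) * G₁₃ x z * G₂₃ y z := by
    have : ∀ z : X₃, -(ε * p₁₂) * (n₁ * n₂)
        ≤ ∑ x : X₁, ∑ y : X₂, (G₁₂ x y - q₁₂) * G₁₃ x z * G₂₃ y z := by
      intro z
      have h := hd12 (fun x => G₁₃ x z) (fun y => G₂₃ y z)
        (fun x => h13 x z) (fun y => h23 y z)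
      rw [le_div_iff₀ (by positivity)] at h
      simpa using h
    calc -(ε * p₁₂) * (n₁ * n₂ * n₃) = ∑ _z : X₃, -(ε * p₁₂) * (n₁ * n₂) := by
          rw [Finset.sum_const, Finset.card_univ, nsmul_eq_mul]; ring
      _ ≤ _ := Finset.sum_le_sum fun z _ => this z
  -- Bound B
  have hB : -(ε * 1) * (n₁ * n₃ * n₂)
      ≤ ∑ y : X₂, ∑ x : X₁, ∑ z : X₃, (G₁₃ x z - q₁₃) * 1 * G₂₃ y z := by
    have : ∀ y : X₂, -(ε * 1) * (n₁ * n₃)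
        ≤ ∑ x : X₁, ∑ z : X₃, (G₁₃ x z - q₁₃) * 1 * G₂₃ y z := by
      intro y
      have h := hd13 (fun _ => 1) (fun z => G₂₃ y z)
        (fun x => ⟨zero_le_one, le_refl 1⟩) (fun z => h23 y z)
      rw [le_div_iff₀ (by positivity)] at h
      simpa using h
    calc -(ε * 1) * (n₁ * n₃ * n₂) = ∑ _y : X₂, -(ε * 1) * (n₁ * n₃) := by
          rw [Finset.sum_const, Finset.card_univ, nsmul_eq_mul]; ring
      _ ≤ _ := Finset.sum_le_sum fun y _ => this y
  -- Bound C
  have hC : -(ε * 1) * (n₂ * n₃)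
      ≤ ∑ y : X₂, ∑ z : X₃, (G₂₃ y z - q₂₃) * 1 * 1 := by
    have h := hd23 (fun _ => 1) (fun _ => 1)
      (fun _ => ⟨zero_le_one, le_refl 1⟩) (fun _ => ⟨zero_le_one, le_refl 1⟩)
    rw [le_div_iff₀ (by positivity)] at h
    simpa using h
  -- Key identity
  have comm1 : (∑ z : X₃, ∑ x : X₁, ∑ y : X₂, (G₁₂ x y - q₁₂) * G₁₃ x z * G₂₃ y z)
      = ∑ x : X₁, ∑ y : X₂, ∑ z : X₃, (G₁₂ x y - q₁₂) * G₁₃ x z * G₂₃ y z := by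
    rw [Finset.sum_comm]
    exact Finset.sum_congr rfl fun x _ => Finset.sum_comm
  have comm2 : (∑ y : X₂, ∑ x : X₁, ∑ z : X₃, (G₁₃ x z - q₁₃) * 1 * G₂₃ y z)
      = ∑ x : X₁, ∑ y : X₂, ∑ z : X₃, (G₁₃ x z - q₁₃) * 1 * G₂₃ y z := Finset.sum_comm
  have key : (∑ x : X₁, ∑ y : X₂, ∑ z : X₃, G₁₂ x y * G₁₃ x z * G₂₃ y z)
      = (∑ x : X₁, ∑ y : X₂, ∑ z : X₃, (G₁₂ x y - q₁₂) * G₁₃ x z * G₂₃ y z)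
        + q₁₂ * (∑ x : X₁, ∑ y : X₂, ∑ z : X₃, (G₁₃ x z - q₁₃) * 1 * G₂₃ y z)
        + q₁₂ * q₁₃ * n₁ * (∑ y : X₂, ∑ z : X₃, (G₂₃ y z - q₂₃) * 1 * 1)
        + q₁₂ * q₁₃ * q₂₃ * (n₁ * n₂ * n₃) := by
    have expand : (∑ x : X₁, ∑ y : X₂, ∑ z : X₃, G₁₂ x y * G₁₃ x z * G₂₃ y z)
        = ∑ x : X₁, ∑ y : X₂, ∑ z : X₃,
            ((G₁₂ x y - q₁₂) * G₁₃ x z * G₂₃ y z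
              + q₁₂ * ((G₁₃ x z - q₁₃) * 1 * G₂₃ y z)
              + q₁₂ * q₁₃ * ((G₂₃ y z - q₂₃) * 1 * 1)
              + q₁₂ * q₁₃ * q₂₃) := by
      refine Finset.sum_congr rfl fun x _ => Finset.sum_congr rfl fun y _ =>
        Finset.sum_congr rfl fun z _ => ?_
      ring
    rw [expand]
    simp only [Finset.sum_add_distrib, ← Finset.mul_sum, Finset.sum_const,
      Finset.card_univ, nsmul_eq_mul]
    push_cast
    ring
  rw [le_div_iff₀ (by positivity)]
  rw [key, ← comm1, ← comm2]
  have hqq : q₁₂ * q₁₃ ≤ p₁₂ :=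
    (mul_le_of_le_one_right hq₁₂.1 hq₁₃.2).trans hq₁₂.2
  nlinarith [mul_le_mul_of_nonneg_left hB hq₁₂.1,
    mul_le_mul_of_nonneg_left hC (mul_nonneg hq₁₂.1 hq₁₃.1),
    mul_pos (mul_pos hn₁p hn₂p) hn₃p,
    mul_nonneg (mul_nonneg hε.le (sub_nonneg.2 hq₁₂.2)) (mul_pos (mul_pos hn₁p hn₂p) hn₃p).le,
    mul_nonneg (mul_nonneg hε.le (sub_nonneg.2 hqq)) (mul_pos (mul_pos hn₁p hn₂p) hn₃p).le]
end

section
/- Let 0 < δ, γ, ξ, p < 1 with 2γ² ≤ δ ξ² p². Let Γ be a graph with finite nonempty vertex subsets X₀, X₁, …, X_m such that for each i = 1, …, m, the pair (X_{i−1}, X_i)_Γ is (p, (1−δ)γ √(|X_{i−1}||X_i|))-jumbled. Then there exist subsets X̃_i ⊆ X_i with |X̃_i| ≥ (1−δ)|X_i| for every i such that for every 0 ≤ i ≤ m−1, every vertex x ∈ X̃_i satisfies |E_{y∈X̃_{i+1}}[Γ(x,y)] − p| ≤ ξ p, and the induced bipartite graph (X̃_i, X̃_{i+1})_Γ is (p,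 γ√(|X̃_i||X̃_{i+1}|))-jumbled. -/
open Finset

theorem card_filter_lt_abs_le_two_mul {α : Type*} {s : Finset α} {f : α → ℝ} {c K : ℝ}
    (h : ∀ t ⊆ s, c * #t ≤ |∑ x ∈ t, f x| → (#t : ℝ) ≤ K) :
    (#{x ∈ s | c < |f x|} : ℝ) ≤ 2 * K := by
  classical
  have hpos : (#{x ∈ s | c < f x} : ℝ) ≤ K := by
    refine h _ (filter_subset _ _) ?_
    calc c * #{x ∈ s | c < f x} ≤ ∑ x ∈ s with c < f x, f x := by
          simpa [mul_comm] using card_nsmul_le_sum {x ∈ s | c < f x} f c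
            fun x hx ↦ (mem_filter.1 hx).2.le
      _ ≤ _ := le_abs_self _
  have hneg : (#{x ∈ s | f x < -c} : ℝ) ≤ K := by
    refine h _ (filter_subset _ _) ?_
    calc c * #{x ∈ s | f x < -c} ≤ -∑ x ∈ s with f x < -c, f x := by
          have := sum_le_card_nsmul {x ∈ s | f x < -c} f (-c) fun x hx ↦ (mem_filter.1 hx).2.le
          simp only [nsmul_eq_mul] at this
          linarith
      _ ≤ _ := neg_le_abs _
  have hsplit : {x ∈ s | c < |f x|} ⊆ {x ∈ s | c < f x} ∪ {x ∈ s | f x < -c} := by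
    intro x hx
    rw [mem_filter] at hx
    rcases lt_abs.1 hx.2 with hx' | hx'
    · exact mem_union_left _ (mem_filter.2 ⟨hx.1, hx'⟩)
    · exact mem_union_right _ (mem_filter.2 ⟨hx.1, by linarith⟩)
  have hcard : (#{x ∈ s | c < |f x|} : ℝ) ≤ #{x ∈ s | c < f x} + #{x ∈ s | f x < -c} := by
    exact_mod_cast (card_le_card hsplit).trans (card_union_le _ _)
  linarith

theorem Fin.exists_chain_of_backward_step {α : Type*} {m : ℕ} (Q : Fin (m + 1) → α → Prop)
    (P : α → α → Prop) (hlast : ∃ b, Q (Fin.last m) b)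
    (hstep : ∀ i : Fin m, ∀ b, Q i.succ b → ∃ a, Q i.castSucc a ∧ P a b) :
    ∃ Y : Fin (m + 1) → α, (∀ i, Q i (Y i)) ∧ ∀ i : Fin m, P (Y i.castSucc) (Y i.succ) := by
  induction m with
  | zero =>
    obtain ⟨b, hb⟩ := hlast
    exact ⟨fun _ ↦ b, fun i ↦ Fin.eq_zero i ▸ hb, fun i ↦ i.elim0⟩
  | succ m ih =>
    obtain ⟨Y, hQ, hP⟩ := ih (fun i ↦ Q i.succ) (by simpa using hlast)
      fun i b hb ↦ by simpa [← Fin.succ_castSucc] using hstep i.succ b hb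
    obtain ⟨a, ha, hab⟩ := hstep 0 (Y 0) (by simpa using hQ 0)
    refine ⟨Fin.cons a Y, Fin.cases (by simpa using ha) (by simpa using hQ), Fin.cases ?_ ?_⟩
    · simpa using hab
    · intro i
      simpa [← Fin.succ_castSucc] using hP i

section Jumbled

variable {V : Type*} {Γ : V → V → ℝ} {A B A' B' : Finset V} {δ γ γ' ξ p : ℝ}

theorem jumbled_iff_abs_sum_le :
    Jumbled Γ A B p γ ↔ ∀ u v : V → ℝ, (∀ x, 0 ≤ u x ∧ u x ≤ 1) → (∀ y, 0 ≤ v y ∧ v y ≤ 1) →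
      |∑ x ∈ A, ∑ y ∈ B, (Γ x y - p) * u x * v y|
        ≤ γ * √(#A * #B) * √(∑ x ∈ A, u x) * √(∑ y ∈ B, v y) := by
  refine forall₄_congr fun u v _ _ ↦ ?_
  rcases A.eq_empty_or_nonempty with rfl | hA
  · simp
  rcases B.eq_empty_or_nonempty with rfl | hB
  · simp
  have hA' : (0 : ℝ) < #A := by positivity
  have hB' : (0 : ℝ) < #B := by positivity
  have hRHS : ∀ s t : ℝ, γ * (√s / √(#A : ℝ)) * (√t / √(#B : ℝ)) * (#A * #B)
      = γ * √(#A * #B : ℝ) * √s * √t := by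
    intro s t
    rw [Real.sqrt_mul hA'.le]
    field_simp
    rw [Real.sq_sqrt hA'.le, Real.sq_sqrt hB'.le]
    ring
  rw [Real.sqrt_div' _ hA'.le, Real.sqrt_div' _ hB'.le, abs_div,
    abs_of_pos (by positivity : (0 : ℝ) < #A * #B), div_le_iff₀ (by positivity), hRHS]

theorem sum_sum_indicator_mul_indicator {α β : Type*} {s s' : Finset α} {t t' : Finset β}
    (hs : s' ⊆ s) (ht : t' ⊆ t) (f : α → β → ℝ) (u : α → ℝ) (v : β → ℝ) :
    ∑ x ∈ s, ∑ y ∈ t, f x y * (s' : Set α).indicator u x * (t' : Set β).indicator v y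
      = ∑ x ∈ s', ∑ y ∈ t', f x y * u x * v y := by
  calc _ = ∑ x ∈ s', ∑ y ∈ t, f x y * u x * (t' : Set β).indicator v y :=
        sum_indicator_subset_of_eq_zero u
          (fun x a ↦ ∑ y ∈ t, f x y * a * (t' : Set β).indicator v y) hs (by simp)
    _ = _ := sum_congr rfl fun x _ ↦
        sum_indicator_subset_of_eq_zero v (fun y b ↦ f x y * u x * b) ht (by simp)

theorem Set.indicator_nonneg_and_le_one {α : Type*} {u : α → ℝ} (hu : ∀ x, 0 ≤ u x ∧ u x ≤ 1)
    (s : Set α) (x : α) : 0 ≤ s.indicator u x ∧ s.indicator u x ≤ 1 := by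
  by_cases hx : x ∈ s <;> simp [hx, hu x]

theorem Jumbled.abs_sum_sum_le (hj : Jumbled Γ A B p γ) (hA : A' ⊆ A) (hB : B' ⊆ B)
    {u v : V → ℝ} (hu : ∀ x, 0 ≤ u x ∧ u x ≤ 1) (hv : ∀ y, 0 ≤ v y ∧ v y ≤ 1) :
    |∑ x ∈ A', ∑ y ∈ B', (Γ x y - p) * u x * v y|
      ≤ γ * √(#A * #B) * √(∑ x ∈ A', u x) * √(∑ y ∈ B', v y) := by
  have h := jumbled_iff_abs_sum_le.1 hj _ _ (Set.indicator_nonneg_and_le_one hu A')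
    (Set.indicator_nonneg_and_le_one hv B')
  rwa [sum_sum_indicator_mul_indicator hA hB, sum_indicator_subset _ hA,
    sum_indicator_subset _ hB] at h

theorem Jumbled.of_subset (hj : Jumbled Γ A B p γ) (hA : A' ⊆ A) (hB : B' ⊆ B)
    (hγ : γ * √(#A * #B) ≤ γ' * √(#A' * #B')) : Jumbled Γ A' B' p γ' := by
  refine jumbled_iff_abs_sum_le.2 fun u v hu hv ↦ (hj.abs_sum_sum_le hA hB hu hv).trans ?_
  gcongr

theorem Jumbled.sq_mul_card_mul_card_le {S T : Finset V} (hj : Jumbled Γ A B p γ)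
    (hS : S ⊆ A) (hT : T ⊆ B) {ε : ℝ} (hε : 0 ≤ ε)
    (h : ε * #S * #T ≤ |∑ x ∈ S, ∑ y ∈ T, (Γ x y - p)|) :
    ε ^ 2 * #S * #T ≤ γ ^ 2 * #A * #B := by
  have hST := hj.abs_sum_sum_le hS hT (u := 1) (v := 1) (by simp) (by simp)
  simp only [Pi.one_apply, mul_one, sum_const, nsmul_eq_mul] at hST
  have hsq := pow_le_pow_left₀ (by positivity) (h.trans hST) 2
  simp only [mul_pow, Nat.cast_nonneg, mul_nonneg, Real.sq_sqrt] at hsq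
  rcases (show (0 : ℝ) ≤ #S * #T by positivity).eq_or_lt with hzero | hpos
  · rw [mul_assoc, ← hzero, mul_zero]; positivity
  · nlinarith

theorem Jumbled.of_large_subset {c : ℝ} (hj : Jumbled Γ A B p (c * γ)) (hA : A' ⊆ A) (hB : B' ⊆ B)
    (hc : 0 ≤ c) (hγ : 0 ≤ γ) (hA' : c * #A ≤ #A') (hB' : c * #B ≤ #B') :
    Jumbled Γ A' B' p γ := by
  refine hj.of_subset hA hB ?_
  calc c * γ * √(#A * #B) = γ * √((c * #A) * (c * #B)) := by
        rw [show (c * #A) * (c * #B) = c ^ 2 * (#A * #B) by ring, Real.sqrt_mul (sq_nonneg c),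
          Real.sqrt_sq hc]
        ring
    _ ≤ γ * √(#A' * #B') := by gcongr

theorem Jumbled.card_filter_deviation_mul_sq_le (hδ0 : 0 ≤ δ) (hδ1 : δ < 1) (hξp : 0 < ξ * p)
    (hB' : B' ⊆ B) (hB'card : (1 - δ) * #B ≤ #B') (hb : (0 : ℝ) < #B')
    (hj : Jumbled Γ A B p ((1 - δ) * γ)) :
    (#{x ∈ A | ξ * p * #B' < |∑ y ∈ B', (Γ x y - p)|} : ℝ) * (ξ * p) ^ 2 ≤ 2 * γ ^ 2 * #A := by
  have hξp2 : 0 < (ξ * p) ^ 2 := by positivity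
  rw [← le_div_iff₀ hξp2, mul_assoc 2, mul_div_assoc 2]
  refine card_filter_lt_abs_le_two_mul fun S hS hdisc ↦ ?_
  have hsq := hj.sq_mul_card_mul_card_le hS hB' hξp.le (by linarith)
  rw [le_div_iff₀ hξp2]
  refine le_of_mul_le_mul_right ?_ hb
  calc (#S : ℝ) * (ξ * p) ^ 2 * #B' = (ξ * p) ^ 2 * #S * #B' := by ring
    _ ≤ ((1 - δ) * γ) ^ 2 * #A * #B := hsq
    _ = (1 - δ) * γ ^ 2 * #A * ((1 - δ) * #B) := by ring
    _ ≤ 1 * γ ^ 2 * #A * #B' := by gcongr; linarith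
    _ = γ ^ 2 * #A * #B' := by ring

theorem Jumbled.exists_subset_degree_jumbled (hδ0 : 0 ≤ δ) (hδ1 : δ < 1) (hγ : 0 ≤ γ)
    (hξ : 0 < ξ) (hp : 0 < p) (hcond : 2 * γ ^ 2 ≤ δ * ξ ^ 2 * p ^ 2)
    (hB : B.Nonempty) (hB' : B' ⊆ B) (hB'card : (1 - δ) * #B ≤ #B')
    (hj : Jumbled Γ A B p ((1 - δ) * γ)) :
    ∃ A' ⊆ A, (1 - δ) * #A ≤ #A' ∧
      (∀ x ∈ A', |(∑ y ∈ B', Γ x y) / #B' - p| ≤ ξ * p) ∧ Jumbled Γ A' B' p γ := by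
  have hb : (0 : ℝ) < #B' := lt_of_lt_of_le (by have := hB.card_pos; positivity) hB'card
  have hξp : 0 < ξ * p := by positivity
  have hbad := hj.card_filter_deviation_mul_sq_le hδ0 hδ1 hξp hB' hB'card hb
  set d : V → ℝ := fun x ↦ ∑ y ∈ B', (Γ x y - p)
  have hd : ∀ x, (∑ y ∈ B', Γ x y) / #B' - p = d x / #B' := by
    intro x
    simp only [d, sum_sub_distrib, sum_const, nsmul_eq_mul]
    field_simp
  set A' := {x ∈ A | ¬ ξ * p * #B' < |d x|}
  have hA'card : (1 - δ) * #A ≤ #A' := by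
    have hcard : (#{x ∈ A | ξ * p * #B' < |d x|} : ℝ) + #A' = #A := by
      exact_mod_cast card_filter_add_card_filter_not _
    have hδA : (#{x ∈ A | ξ * p * #B' < |d x|} : ℝ) ≤ δ * #A := by
      refine le_of_mul_le_mul_right ?_ (pow_pos hξp 2)
      nlinarith [mul_le_mul_of_nonneg_right hcond (Nat.cast_nonneg (α := ℝ) #A)]
    nlinarith
  refine ⟨A', filter_subset _ _, hA'card, fun x hx ↦ ?_,
    hj.of_large_subset (filter_subset _ _) hB' (by linarith) hγ hA'card hB'card⟩
  rw [hd, abs_div, abs_of_pos hb, div_le_iff₀ hb]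
  exact not_lt.1 (mem_filter.1 hx).2

end Jumbled

theorem stmt_11_general {V : Type*} {m : ℕ}
    (δ γ ξ p : ℝ) (hδ0 : 0 < δ) (hδ1 : δ < 1) (hγ0 : 0 < γ)
    (hξ0 : 0 < ξ) (hp0 : 0 < p)
    (hcond : 2 * γ ^ 2 ≤ δ * ξ ^ 2 * p ^ 2)
    (Γ : V → V → ℝ)
    (X : Fin (m + 1) → Finset V) (hX : ∀ i, (X i).Nonempty)
    (hjumb : ∀ i : Fin m, Jumbled Γ (X i.castSucc) (X i.succ) p ((1 - δ) * γ)) :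
    ∃ Xt : Fin (m + 1) → Finset V,
      (∀ i, Xt i ⊆ X i ∧ (1 - δ) * ((X i).card : ℝ) ≤ ((Xt i).card : ℝ)) ∧
      ∀ i : Fin m,
        (∀ x ∈ Xt i.castSucc,
          |(∑ y ∈ Xt i.succ, Γ x y) / (((Xt i.succ).card : ℝ)) - p| ≤ ξ * p) ∧
        Jumbled Γ (Xt i.castSucc) (Xt i.succ) p γ := by
  refine Fin.exists_chain_of_backward_step (fun i Y ↦ Y ⊆ X i ∧ (1 - δ) * (#(X i) : ℝ) ≤ #Y)
    (fun A B ↦ (∀ x ∈ A, |(∑ y ∈ B, Γ x y) / (#B : ℝ) - p| ≤ ξ * p) ∧ Jumbled Γ A B p γ)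
    ⟨X (Fin.last m), subset_rfl, mul_le_of_le_one_left (Nat.cast_nonneg _) (by linarith)⟩ ?_
  rintro i B ⟨hB, hBcard⟩
  obtain ⟨A, hA, hAcard, hdeg, hAB⟩ := (hjumb i).exists_subset_degree_jumbled hδ0.le hδ1
    hγ0.le hξ0 hp0 hcond (hX i.succ) hB hBcard
  exact ⟨A, ⟨hA, hAcard⟩, hdeg, hAB⟩

theorem stmt_11 {V : Type*} [Fintype V] {m : ℕ}
    (δ γ ξ p : ℝ) (hδ0 : 0 < δ) (hδ1 : δ < 1) (hγ0 : 0 < γ) (hγ1 : γ < 1)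
    (hξ0 : 0 < ξ) (hξ1 : ξ < 1) (hp0 : 0 < p) (hp1 : p < 1)
    (hcond : 2 * γ ^ 2 ≤ δ * ξ ^ 2 * p ^ 2)
    (Γ : V → V → ℝ) (hΓ01 : ∀ x y, Γ x y = 0 ∨ Γ x y = 1) (hΓsymm : ∀ x y, Γ x y = Γ y x)
    (X : Fin (m + 1) → Finset V) (hX : ∀ i, (X i).Nonempty)
    (hjumb : ∀ i : Fin m, Jumbled Γ (X i.castSucc) (X i.succ) p ((1 - δ) * γ)) :
    ∃ Xt : Fin (m + 1) → Finset V,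
      (∀ i, Xt i ⊆ X i ∧ (1 - δ) * ((X i).card : ℝ) ≤ ((Xt i).card : ℝ)) ∧
      ∀ i : Fin m,
        (∀ x ∈ Xt i.castSucc,
          |(∑ y ∈ Xt i.succ, Γ x y) / (((Xt i.succ).card : ℝ)) - p| ≤ ξ * p) ∧
        Jumbled Γ (Xt i.castSucc) (Xt i.succ) p γ :=
  stmt_11_general δ γ ξ p hδ0 hδ1 hγ0 hξ0 hp0 hcond Γ X hX hjumb
end

section
/- Let G be a weighted bipartite graph between finite nonempty sets X and Y with values in [0,1]. Let 0 ≤ q ≤ 1 and ε > 0. Suppose G(K_{1,1}) ≥ (1−ε)q and G(K_{1,2}) ≤ (1+ε)² q², where G(K_{1,1}) = E_{x,y}[G(x,y)] and G(K_{1,2}) = E_{x,y,y'}[G(x,y)G(x,y')]. Let X' = {x ∈ X : E_y[G(x,y)] < (1 − 2ε^{1/3}) q}. Then |X'| ≤ 2 ε^{1/3} |X|. -/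
/-!
Let `d x` be the average weight at `x ∈ X` and `δ = ε^{1/3}`. The two density hypotheses say that
`d` has mean at least `(1 - ε) q` and second moment at most `(1 + ε)² q²`, so its second moment
about `(1 - ε) q` is at most `4 ε q²`. A vertex of `X'` lies at distance more than `(2δ - ε) q`
below `(1 - ε) q`, and Chebyshev's inequality bounds the proportion of such vertices by
`4δ³ / (2δ - δ³)² ≤ 2δ` when `δ ≤ 1/2`; for `δ ≥ 1/2` the claim is trivial.
-/

open Finset

theorem card_filter_lt_sub_mul_sq_le {ι : Type*} [Fintype ι] (f : ι → ℝ) {a b t : ℝ}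
    (ha : 0 ≤ a) (ht : 0 ≤ t) (h₁ : Fintype.card ι * a ≤ ∑ x, f x)
    (h₂ : ∑ x, f x ^ 2 ≤ Fintype.card ι * b ^ 2) :
    (#{x | f x < a - t} : ℝ) * t ^ 2 ≤ Fintype.card ι * (b ^ 2 - a ^ 2) := by
  have hfar : ∀ x ∈ ({x | f x < a - t} : Finset ι), t ^ 2 ≤ (a - f x) ^ 2 := fun x hx ↦ by
    have : t ≤ a - f x := by linarith [(mem_filter.1 hx).2]
    nlinarith
  have hexpand : ∑ x, (a - f x) ^ 2 = ∑ x, f x ^ 2 - 2 * a * ∑ x, f x + Fintype.card ι * a ^ 2 := by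
    simp only [sub_sq', sum_add_distrib, sum_sub_distrib, sum_const, card_univ, nsmul_eq_mul,
      mul_sum]
    ring_nf
  calc (#{x | f x < a - t} : ℝ) * t ^ 2
      ≤ ∑ x ∈ {x | f x < a - t}, (a - f x) ^ 2 := by
        simpa [nsmul_eq_mul] using card_nsmul_le_sum _ _ _ hfar
    _ ≤ ∑ x, (a - f x) ^ 2 :=
        sum_le_sum_of_subset_of_nonneg (subset_univ _) fun _ _ _ ↦ sq_nonneg _
    _ ≤ Fintype.card ι * (b ^ 2 - a ^ 2) := by nlinarith

theorem four_mul_pow_three_le {δ : ℝ} (hδ₀ : 0 ≤ δ) (hδ : δ ≤ 1 / 2) :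
    4 * δ ^ 3 ≤ 2 * δ * (2 * δ - δ ^ 3) ^ 2 := by
  have hsq : 2 ≤ (2 - δ ^ 2) ^ 2 := by nlinarith
  have hcube : 0 ≤ δ ^ 3 := by positivity
  calc 4 * δ ^ 3 = 2 * δ ^ 3 * 2 := by ring
    _ ≤ 2 * δ ^ 3 * (2 - δ ^ 2) ^ 2 := by gcongr
    _ = 2 * δ * (2 * δ - δ ^ 3) ^ 2 := by ring

theorem card_filter_lt_le_of_moments {ι : Type*} [Fintype ι] (f : ι → ℝ) {δ q : ℝ}
    (hδ : 0 < δ) (hq : 0 < q)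
    (h₁ : Fintype.card ι * ((1 - δ ^ 3) * q) ≤ ∑ x, f x)
    (h₂ : ∑ x, f x ^ 2 ≤ Fintype.card ι * ((1 + δ ^ 3) * q) ^ 2) :
    (#{x | f x < (1 - 2 * δ) * q} : ℝ) ≤ 2 * δ * Fintype.card ι := by
  have hcard : (#{x | f x < (1 - 2 * δ) * q} : ℝ) ≤ Fintype.card ι := by
    exact_mod_cast card_le_univ _
  rcases le_or_gt (1 / 2) δ with hbig | hsmall
  · nlinarith [Nat.cast_nonneg (α := ℝ) (Fintype.card ι)]
  have hgap : 0 < (2 * δ - δ ^ 3) * q := by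
    have : δ ^ 3 < δ := by nlinarith [pow_pos hδ 2]
    exact mul_pos (by linarith) hq
  have hcheb := card_filter_lt_sub_mul_sq_le f (by nlinarith [pow_pos hδ 3]) hgap.le h₁ h₂
  rw [show (1 - δ ^ 3) * q - (2 * δ - δ ^ 3) * q = (1 - 2 * δ) * q by ring] at hcheb
  refine le_of_mul_le_mul_right (hcheb.trans ?_) (pow_pos hgap 2)
  calc (Fintype.card ι : ℝ) * (((1 + δ ^ 3) * q) ^ 2 - ((1 - δ ^ 3) * q) ^ 2)
      = Fintype.card ι * q ^ 2 * (4 * δ ^ 3) := by ring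
    _ ≤ Fintype.card ι * q ^ 2 * (2 * δ * (2 * δ - δ ^ 3) ^ 2) :=
        mul_le_mul_of_nonneg_left (four_mul_pow_three_le hδ.le hsmall.le) (by positivity)
    _ = 2 * δ * Fintype.card ι * ((2 * δ - δ ^ 3) * q) ^ 2 := by ring

open Classical in
theorem stmt_14_general {X Y : Type*} [Fintype X] [Fintype Y] [Nonempty X]
    (G : X → Y → ℝ)
    (q ε : ℝ) (hq : 0 < q) (hε : 0 < ε)
    (h11 : (1 - ε) * q ≤ (∑ x : X, ∑ y : Y, G x y) /
        ((Fintype.card X : ℝ) * (Fintype.card Y : ℝ)))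
    (h12 : (∑ x : X, ∑ y : Y, ∑ y' : Y, G x y * G x y') /
        ((Fintype.card X : ℝ) * (Fintype.card Y : ℝ) * (Fintype.card Y : ℝ))
        ≤ (1 + ε) ^ 2 * q ^ 2) :
    ((Finset.univ.filter fun x : X =>
        (∑ y : Y, G x y) / (Fintype.card Y : ℝ) < (1 - 2 * ε ^ ((1 : ℝ) / 3)) * q).card : ℝ)
      ≤ 2 * ε ^ ((1 : ℝ) / 3) * (Fintype.card X : ℝ) := by
  have hm : (0 : ℝ) < Fintype.card X := by exact_mod_cast Fintype.card_pos
  have hcube : (ε ^ ((1 : ℝ) / 3)) ^ 3 = ε := by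
    rw [one_div]; exact_mod_cast Real.rpow_inv_natCast_pow hε.le three_ne_zero
  have hsq (x : X) : ((∑ y, G x y) / Fintype.card Y) ^ 2
      = (∑ y, ∑ y', G x y * G x y') / (Fintype.card Y * Fintype.card Y) := by
    rw [sq, div_mul_div_comm, sum_mul_sum]
  apply card_filter_lt_le_of_moments _ (by positivity) hq
  · rw [hcube, ← sum_div, ← le_div_iff₀' hm, div_div, mul_comm (Fintype.card Y : ℝ)]
    exact h11
  · rw [hcube, mul_pow, sum_congr rfl fun x _ ↦ hsq x, ← sum_div, ← div_le_iff₀' hm, div_div]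
    rwa [mul_comm _ (Fintype.card X : ℝ), ← mul_assoc]

open Classical in
theorem stmt_14 {X Y : Type*} [Fintype X] [Fintype Y] [Nonempty X] [Nonempty Y]
    (G : X → Y → ℝ) (hG : ∀ x y, 0 ≤ G x y ∧ G x y ≤ 1)
    (q ε : ℝ) (hq : 0 < q) (hq1 : q ≤ 1) (hε : 0 < ε)
    (h11 : (1 - ε) * q ≤ (∑ x : X, ∑ y : Y, G x y) /
        ((Fintype.card X : ℝ) * (Fintype.card Y : ℝ)))
    (h12 : (∑ x : X, ∑ y : Y, ∑ y' : Y, G x y * G x y') /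
        ((Fintype.card X : ℝ) * (Fintype.card Y : ℝ) * (Fintype.card Y : ℝ))
        ≤ (1 + ε) ^ 2 * q ^ 2) :
    ((Finset.univ.filter fun x : X =>
        (∑ y : Y, G x y) / (Fintype.card Y : ℝ) < (1 - 2 * ε ^ ((1 : ℝ) / 3)) * q).card : ℝ)
      ≤ 2 * ε ^ ((1 : ℝ) / 3) * (Fintype.card X : ℝ) :=
  stmt_14_general G q ε hq hε h11 h12
end

section
/- Let G be a weighted bipartite graph between finite nonempty sets X and Y with values in [0,1], let 0 ≤ q ≤ 1 and ε > 0. Suppose G(K_{1,1}) ≥ (1−ε)q, G(K_{1,2}) ≤ (1+ε)² q² and G(K_{2,1}) ≤ (1+ε)² q². Then G(P₃) ≥ (1 − 14 ε^{1/9}) q³, where G(P₃) = E_{x,x'∈X, y,y'∈Y}[G(x,y)G(x',y)G(x',y')] is the normalized count of paths with three edges alternating X,Y,X,Y. -/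
open Finset

private lemma aux_key (η : ℝ) (h0 : 0 < η) (h14 : η ≤ 1/14) :
    (1 - 14*η) ≤ (1-η^3)^2 * (1-η^9-10*η^3) := by
  have hexp : (1-η^3)^2 * (1-η^9-10*η^3)
      = 1 - 12*η^3 + 21*η^6 - 11*η^9 + 2*η^12 - η^15 := by ring
  have h1 : η ≤ 1 := by linarith
  have hsq : η^2 ≤ 1/196 := by nlinarith
  have t1 : η^3 ≤ η*(1/196) := by nlinarith [mul_le_mul_of_nonneg_left hsq h0.le]
  have h31 : η^3 ≤ 1 := by nlinarith
  have h91 : η^9 ≤ 1 := by nlinarith [pow_nonneg h0.le 3]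
  have t2 : η^9 ≤ η^6 := by
    nlinarith [mul_le_mul_of_nonneg_left h31 (pow_nonneg h0.le 6)]
  have t3 : η^15 ≤ η^6 := by
    nlinarith [mul_le_mul_of_nonneg_left h91 (pow_nonneg h0.le 6)]
  have t4 : (0:ℝ) ≤ η^12 := by positivity
  have t5 : (0:ℝ) ≤ η^6 := by positivity
  rw [hexp]; linarith

private lemma aux_delta (η : ℝ) (h0 : 0 ≤ η) (h1 : η ≤ 1) : 0 ≤ η^3 - η^9 := by
  have h6 : η^6 ≤ 1 := pow_le_one₀ h0 h1
  nlinarith [mul_nonneg (pow_nonneg h0 3) (sub_nonneg.mpr h6)]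

private lemma aux_var (SD μ e q m n : ℝ) (h1 : SD ≤ (1+e)^2*q^2*(m*n*n))
    (h2 : (1-e)^2*q^2 ≤ μ^2) (hm : 0 ≤ m) (hn : 0 ≤ n) :
    SD - 2*(μ*n)*(μ*(m*n)) + m*(μ*n)^2 ≤ 4*e*q^2*(m*n^2) := by
  nlinarith [mul_le_mul_of_nonneg_right h2 (mul_nonneg hm (mul_nonneg hn hn))]

private lemma aux_varY (SD μ e q m n : ℝ) (h1 : SD ≤ (1+e)^2*q^2*(m*m*n))
    (h2 : (1-e)^2*q^2 ≤ μ^2) (hm : 0 ≤ m) (hn : 0 ≤ n) :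
    SD - 2*(μ*m)*(μ*(m*n)) + n*(μ*m)^2 ≤ 4*e*q^2*(n*m^2) := by
  nlinarith [mul_le_mul_of_nonneg_right h2 (mul_nonneg hn (mul_nonneg hm hm))]

private lemma aux_dev (a μ η q n : ℝ) (hxlt : a < (1-η^3)*q*n)
    (hμ1 : (1-η^9)*q ≤ μ) (hq : 0 < q) (hn : 0 < n) :
    (η^3-η^9)*q*n ≤ μ*n - a := by
  nlinarith [mul_le_mul_of_nonneg_right hμ1 hn.le]

private lemma aux_card (c η M q n : ℝ) (hc : 0 ≤ c) (h0 : 0 < η) (h14 : η ≤ 1/14)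
    (hM : 0 ≤ M) (hq : 0 < q) (hn : 0 < n)
    (h : c * ((η^3-η^9)*q*n)^2 ≤ 4*η^9*q^2*(M*n^2)) : c ≤ 5*η^3*M := by
  have hq2 : (0:ℝ) < q^2*n^2 := by positivity
  have step1 : c*(η^3-η^9)^2 ≤ 4*η^9*M := by
    have h2 : c*(η^3-η^9)^2*(q^2*n^2) ≤ 4*η^9*M*(q^2*n^2) := by nlinarith [h]
    exact le_of_mul_le_mul_right h2 hq2
  have h6 : η^6 ≤ (1/14:ℝ)^6 := pow_le_pow_left₀ h0.le h14 6
  have h45 : (4:ℝ)/5 ≤ (1-η^6)^2 := by nlinarith [pow_nonneg h0.le 6, sq_nonneg (η^6)]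
  have hcard6 : c*η^6 ≤ 5*η^9*M := by
    nlinarith [step1, mul_le_mul_of_nonneg_left h45 (mul_nonneg hc (pow_nonneg h0.le 6))]
  have hp6 : (0:ℝ) < η^6 := by positivity
  exact le_of_mul_le_mul_right (by nlinarith [hcard6] : c*η^6 ≤ 5*η^3*M*η^6) hp6

private lemma aux_shrink (c η q v : ℝ) (hc : 0 ≤ c) (h0 : 0 ≤ η) (hq : 0 ≤ q)
    (hv : 0 ≤ v) : c*((1-η^3)*q*v) ≤ c*q*v := by
  nlinarith [mul_nonneg (mul_nonneg (mul_nonneg hc (pow_nonneg h0 3)) hq) hv]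

private lemma aux_T2 (Bc Byc T η q m n : ℝ)
    (hT : (1-η^9)*q*(m*n) - Bc*q*n - Byc*q*m ≤ T)
    (hBx : Bc ≤ 5*η^3*m) (hBy : Byc ≤ 5*η^3*n)
    (hq : 0 < q) (hm : 0 < m) (hn : 0 < n) :
    (1-η^9-10*η^3)*q*(m*n) ≤ T := by
  nlinarith [mul_le_mul_of_nonneg_right hBx (mul_nonneg hq.le hn.le),
    mul_le_mul_of_nonneg_right hBy (mul_nonneg hq.le hm.le)]

private lemma aux_final (η q m n T P : ℝ) (h0 : 0 < η) (h14 : η ≤ 1/14)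
    (hq : 0 < q) (hm : 0 < m) (hn : 0 < n)
    (hT2 : (1-η^9-10*η^3)*q*(m*n) ≤ T)
    (hPb : ((1-η^3)*q*m)*((1-η^3)*q*n)*T ≤ P) :
    (1-14*η)*q^3*((m*n)^2) ≤ P := by
  have key := aux_key η h0 h14
  have h1δ : (0:ℝ) ≤ 1-η^3 := by nlinarith [pow_le_one₀ h0.le (by linarith : η ≤ 1) (n := 3)]
  have hc : (0:ℝ) ≤ ((1-η^3)*q*m)*((1-η^3)*q*n) := by positivity
  calc (1-14*η)*q^3*((m*n)^2) = (1-14*η)*(q^3*(m*n)^2) := by ring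
    _ ≤ ((1-η^3)^2*(1-η^9-10*η^3))*(q^3*(m*n)^2) :=
        mul_le_mul_of_nonneg_right key (by positivity)
    _ = (((1-η^3)*q*m)*((1-η^3)*q*n))*((1-η^9-10*η^3)*q*(m*n)) := by ring
    _ ≤ (((1-η^3)*q*m)*((1-η^3)*q*n))*T := mul_le_mul_of_nonneg_left hT2 hc
    _ ≤ P := hPb

set_option maxHeartbeats 2000000 in
theorem stmt_15 {X Y : Type*} [Fintype X] [Fintype Y] [Nonempty X] [Nonempty Y]
    (G : X → Y → ℝ) (hG : ∀ x y, 0 ≤ G x y ∧ G x y ≤ 1)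
    (q ε : ℝ) (hq : 0 < q) (hq1 : q ≤ 1) (hε : 0 < ε) (hε1 : ε ≤ 1)
    (h11 : (1 - ε) * q ≤ (∑ x : X, ∑ y : Y, G x y) /
        ((Fintype.card X : ℝ) * (Fintype.card Y : ℝ)))
    (h12 : (∑ x : X, ∑ y : Y, ∑ y' : Y, G x y * G x y') /
        ((Fintype.card X : ℝ) * (Fintype.card Y : ℝ) * (Fintype.card Y : ℝ))
        ≤ (1 + ε) ^ 2 * q ^ 2)
    (h21 : (∑ x : X, ∑ x' : X, ∑ y : Y, G x y * G x' y) /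
        ((Fintype.card X : ℝ) * (Fintype.card X : ℝ) * (Fintype.card Y : ℝ))
        ≤ (1 + ε) ^ 2 * q ^ 2) :
    (1 - 14 * ε ^ ((1 : ℝ) / 9)) * q ^ 3
      ≤ (∑ x : X, ∑ x' : X, ∑ y : Y, ∑ y' : Y, G x y * G x' y * G x' y') /
          (((Fintype.card X : ℝ) * (Fintype.card Y : ℝ)) ^ 2) := by
  classical
  have hGnn : ∀ x y, 0 ≤ G x y := fun x y => (hG x y).1
  set m := (Fintype.card X : ℝ) with hm_def
  set n := (Fintype.card Y : ℝ) with hn_def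
  clear_value m n
  have hm : 0 < m := by rw [hm_def]; exact_mod_cast Fintype.card_pos (α := X)
  have hn : 0 < n := by rw [hn_def]; exact_mod_cast Fintype.card_pos (α := Y)
  set P := ∑ x : X, ∑ x' : X, ∑ y : Y, ∑ y' : Y, G x y * G x' y * G x' y' with hP_def
  clear_value P
  have hPnn : 0 ≤ P := by
    rw [hP_def]
    refine sum_nonneg fun _ _ => sum_nonneg fun _ _ => sum_nonneg fun _ _ =>
      sum_nonneg fun _ _ => ?_
    exact mul_nonneg (mul_nonneg (hGnn _ _) (hGnn _ _)) (hGnn _ _)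
  by_cases hcase : (1:ℝ)/14 ≤ ε ^ ((1:ℝ)/9)
  · have h1 : (1 - 14 * ε ^ ((1:ℝ)/9)) * q ^ 3 ≤ 0 := by
      have := mul_le_mul_of_nonneg_right
        (show (1 - 14 * ε ^ ((1:ℝ)/9)) ≤ 0 by linarith)
        (show (0:ℝ) ≤ q^3 by positivity)
      simpa using this
    have h2 : (0:ℝ) ≤ P / ((m*n)^2) := div_nonneg hPnn (by positivity)
    linarith
  · push_neg at hcase
    set η := ε ^ ((1:ℝ)/9) with hη_def
    have hε9 : ε = η ^ 9 := by
      rw [hη_def, ← Real.rpow_natCast (ε ^ ((1:ℝ)/9)) 9, ← Real.rpow_mul hε.le]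
      norm_num
    have hη0 : 0 < η := Real.rpow_pos_of_pos hε _
    clear_value η
    have hη14 : η ≤ 1/14 := le_of_lt hcase
    rw [hε9] at h11 h12 h21
    have hη1 : η ≤ 1 := by linarith
    have hη9le1 : η^9 ≤ 1 := pow_le_one₀ hη0.le hη1
    have hδ1 : η^3 ≤ 1 := pow_le_one₀ hη0.le hη1
    have hδε : 0 ≤ η^3 - η^9 := aux_delta η hη0.le hη1
    -- row and column sums
    set Sd : X → ℝ := fun x => ∑ y, G x y with hSd_def
    set Se : Y → ℝ := fun y => ∑ x, G x y with hSe_def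
    clear_value Sd Se
    set S := ∑ x, Sd x with hS_def
    clear_value S
    have hSdnn : ∀ x, 0 ≤ Sd x := fun x => by
      rw [hSd_def]; exact sum_nonneg fun _ _ => hGnn _ _
    have hSenn : ∀ y, 0 ≤ Se y := fun y => by
      rw [hSe_def]; exact sum_nonneg fun _ _ => hGnn _ _
    have hmn : (0:ℝ) < m * n := mul_pos hm hn
    have hS : (1 - η^9) * q * (m*n) ≤ S := (le_div_iff₀ hmn).mp h11
    -- second moment bounds
    have h12' : ∑ x, (Sd x)^2 ≤ (1+η^9)^2 * q^2 * (m*n*n) := by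
      have h := (div_le_iff₀ (by positivity : (0:ℝ) < m*n*n)).mp h12
      calc ∑ x, (Sd x)^2
          = ∑ x : X, ∑ y : Y, ∑ y' : Y, G x y * G x y' := by
            refine sum_congr rfl fun x _ => ?_
            simp only [hSd_def]
            rw [sq, Finset.sum_mul_sum]
        _ ≤ (1+η^9)^2 * q^2 * (m*n*n) := h
    have h21' : ∑ y, (Se y)^2 ≤ (1+η^9)^2 * q^2 * (m*m*n) := by
      have h := (div_le_iff₀ (by positivity : (0:ℝ) < m*m*n)).mp h21
      calc ∑ y, (Se y)^2
          = ∑ y : Y, ∑ x : X, ∑ x' : X, G x y * G x' y := by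
            refine sum_congr rfl fun y _ => ?_
            simp only [hSe_def]
            rw [sq, Finset.sum_mul_sum]
        _ = ∑ x : X, ∑ y : Y, ∑ x' : X, G x y * G x' y := Finset.sum_comm
        _ = ∑ x : X, ∑ x' : X, ∑ y : Y, G x y * G x' y := by
            refine sum_congr rfl fun x _ => Finset.sum_comm
        _ ≤ (1+η^9)^2 * q^2 * (m*m*n) := h
    -- the mean
    set μ := S / (m*n) with hμ_def
    clear_value μ
    have hμ1 : (1 - η^9) * q ≤ μ := by rw [hμ_def]; exact (le_div_iff₀ hmn).mpr hS
    have hbase : 0 ≤ (1-η^9)*q := mul_nonneg (by linarith) hq.le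
    have hμ0 : 0 ≤ μ := le_trans hbase hμ1
    have hSμ : S = μ * (m*n) := by rw [hμ_def]; field_simp
    have hμsq : (1 - η^9)^2 * q^2 ≤ μ^2 := by
      calc (1 - η^9)^2 * q^2 = ((1-η^9)*q) * ((1-η^9)*q) := by ring
        _ ≤ μ * μ := mul_le_mul hμ1 hμ1 hbase hμ0
        _ = μ^2 := (sq μ).symm
    -- variance bounds
    have hvar : ∑ x, (Sd x - μ*n)^2 ≤ 4 * η^9 * q^2 * (m*n^2) := by
      have expand : ∑ x, (Sd x - μ*n)^2
          = (∑ x, (Sd x)^2) - 2*(μ*n)*S + m*(μ*n)^2 := by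
        have h1 : ∀ x : X, (Sd x - μ*n)^2 = (Sd x)^2 - 2*(μ*n)*Sd x + (μ*n)^2 :=
          fun x => by ring
        rw [Finset.sum_congr rfl fun x _ => h1 x]
        rw [Finset.sum_add_distrib, Finset.sum_sub_distrib, ← Finset.mul_sum,
          Finset.sum_const, nsmul_eq_mul, Finset.card_univ, ← hS_def, ← hm_def]
      rw [expand, hSμ]
      exact aux_var _ μ (η^9) q m n h12' hμsq hm.le hn.le
    have hvarY : ∑ y, (Se y - μ*m)^2 ≤ 4 * η^9 * q^2 * (n*m^2) := by
      have hSe_sum : ∑ y, Se y = S := by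
        rw [hS_def, hSe_def, hSd_def]; exact Finset.sum_comm
      have expand : ∑ y, (Se y - μ*m)^2
          = (∑ y, (Se y)^2) - 2*(μ*m)*S + n*(μ*m)^2 := by
        have h1 : ∀ y : Y, (Se y - μ*m)^2 = (Se y)^2 - 2*(μ*m)*Se y + (μ*m)^2 :=
          fun y => by ring
        rw [Finset.sum_congr rfl fun y _ => h1 y]
        rw [Finset.sum_add_distrib, Finset.sum_sub_distrib, ← Finset.mul_sum,
          Finset.sum_const, nsmul_eq_mul, Finset.card_univ, hSe_sum, ← hn_def]
      rw [expand, hSμ]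
      exact aux_varY _ μ (η^9) q m n h21' hμsq hm.le hn.le
    -- bad sets
    set Bx := Finset.univ.filter (fun x : X => Sd x < (1-η^3)*q*n) with hBx_def
    set By := Finset.univ.filter (fun y : Y => Se y < (1-η^3)*q*m) with hBy_def
    clear_value Bx By
    -- Chebyshev
    have hcheb_x : (Bx.card : ℝ) * ((η^3-η^9)*q*n)^2 ≤ 4 * η^9 * q^2 * (m*n^2) := by
      have h1 : ∀ x ∈ Bx, ((η^3-η^9)*q*n)^2 ≤ (Sd x - μ*n)^2 := by
        intro x hx
        rw [hBx_def] at hx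
        have hxlt : Sd x < (1-η^3)*q*n := (Finset.mem_filter.mp hx).2
        have h2 : (η^3-η^9)*q*n ≤ μ*n - Sd x := aux_dev _ _ _ _ _ hxlt hμ1 hq hn
        have h3 : 0 ≤ (η^3-η^9)*q*n := mul_nonneg (mul_nonneg hδε hq.le) hn.le
        calc ((η^3-η^9)*q*n)^2 ≤ (μ*n - Sd x)^2 := pow_le_pow_left₀ h3 h2 2
          _ = (Sd x - μ*n)^2 := by ring
      calc (Bx.card : ℝ) * ((η^3-η^9)*q*n)^2
          ≤ ∑ x ∈ Bx, (Sd x - μ*n)^2 := by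
            have := Finset.card_nsmul_le_sum Bx (fun x => (Sd x - μ*n)^2)
              (((η^3-η^9)*q*n)^2) h1
            rwa [nsmul_eq_mul] at this
        _ ≤ ∑ x : X, (Sd x - μ*n)^2 :=
            Finset.sum_le_sum_of_subset_of_nonneg (Finset.subset_univ _)
              (fun _ _ _ => sq_nonneg _)
        _ ≤ _ := hvar
    have hcheb_y : (By.card : ℝ) * ((η^3-η^9)*q*m)^2 ≤ 4 * η^9 * q^2 * (n*m^2) := by
      have h1 : ∀ y ∈ By, ((η^3-η^9)*q*m)^2 ≤ (Se y - μ*m)^2 := by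
        intro y hy
        rw [hBy_def] at hy
        have hylt : Se y < (1-η^3)*q*m := (Finset.mem_filter.mp hy).2
        have h2 : (η^3-η^9)*q*m ≤ μ*m - Se y := aux_dev _ _ _ _ _ hylt hμ1 hq hm
        have h3 : 0 ≤ (η^3-η^9)*q*m := mul_nonneg (mul_nonneg hδε hq.le) hm.le
        calc ((η^3-η^9)*q*m)^2 ≤ (μ*m - Se y)^2 := pow_le_pow_left₀ h3 h2 2
          _ = (Se y - μ*m)^2 := by ring
      calc (By.card : ℝ) * ((η^3-η^9)*q*m)^2
          ≤ ∑ y ∈ By, (Se y - μ*m)^2 := by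
            have := Finset.card_nsmul_le_sum By (fun y => (Se y - μ*m)^2)
              (((η^3-η^9)*q*m)^2) h1
            rwa [nsmul_eq_mul] at this
        _ ≤ ∑ y : Y, (Se y - μ*m)^2 :=
            Finset.sum_le_sum_of_subset_of_nonneg (Finset.subset_univ _)
              (fun _ _ _ => sq_nonneg _)
        _ ≤ _ := hvarY
    -- card bounds
    have hBxcard : (Bx.card : ℝ) ≤ 5 * η^3 * m :=
      aux_card _ _ _ _ _ (Bx.card.cast_nonneg) hη0 hη14 hm.le hq hn hcheb_x
    have hBycard : (By.card : ℝ) ≤ 5 * η^3 * n :=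
      aux_card _ _ _ _ _ (By.card.cast_nonneg) hη0 hη14 hn.le hq hm hcheb_y
    -- good sets
    set Gx := Finset.univ.filter (fun x : X => ¬ (Sd x < (1-η^3)*q*n)) with hGx_def
    set Gy := Finset.univ.filter (fun y : Y => ¬ (Se y < (1-η^3)*q*m)) with hGy_def
    clear_value Gx Gy
    set T := ∑ x ∈ Gx, ∑ y ∈ Gy, G x y with hT_def
    clear_value T
    -- lower bound on T
    have hT : (1-η^9)*q*(m*n) - (Bx.card:ℝ)*q*n - (By.card:ℝ)*q*m ≤ T := by
      have hsplit1 : (∑ x ∈ Bx, Sd x) + (∑ x ∈ Gx, Sd x) = S := by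
        rw [hBx_def, hGx_def, Finset.sum_filter_add_sum_filter_not univ _ Sd]
        exact hS_def.symm
      have hBxsum : ∑ x ∈ Bx, Sd x ≤ (Bx.card:ℝ) * ((1-η^3)*q*n) := by
        have := Finset.sum_le_card_nsmul Bx Sd ((1-η^3)*q*n)
          (fun x hx => by
            rw [hBx_def] at hx
            exact le_of_lt (Finset.mem_filter.mp hx).2)
        rwa [nsmul_eq_mul] at this
      have hBx2 : ∑ x ∈ Bx, Sd x ≤ (Bx.card:ℝ) * q * n := by
        have h := aux_shrink (Bx.card:ℝ) η q n Bx.card.cast_nonneg hη0.le hq.le hn.le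
        calc ∑ x ∈ Bx, Sd x ≤ (Bx.card:ℝ) * ((1-η^3)*q*n) := hBxsum
          _ ≤ (Bx.card:ℝ) * q * n := h
      have hGxsplit : ∑ x ∈ Gx, Sd x
          = (∑ x ∈ Gx, ∑ y ∈ By, G x y) + ∑ x ∈ Gx, ∑ y ∈ Gy, G x y := by
        rw [← Finset.sum_add_distrib]
        refine Finset.sum_congr rfl fun x _ => ?_
        rw [hBy_def, hGy_def, Finset.sum_filter_add_sum_filter_not univ _ (G x)]
        simp only [hSd_def]
      have hcross : ∑ x ∈ Gx, ∑ y ∈ By, G x y ≤ (By.card:ℝ) * q * m := by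
        have c1 : ∑ x ∈ Gx, ∑ y ∈ By, G x y ≤ ∑ x : X, ∑ y ∈ By, G x y :=
          Finset.sum_le_sum_of_subset_of_nonneg (Finset.subset_univ _)
            (fun x _ _ => sum_nonneg fun y _ => hGnn x y)
        have c2 : ∑ x : X, ∑ y ∈ By, G x y = ∑ y ∈ By, Se y := by
          rw [Finset.sum_comm]
          simp only [hSe_def]
        have c3 : ∑ y ∈ By, Se y ≤ (By.card:ℝ) * ((1-η^3)*q*m) := by
          have := Finset.sum_le_card_nsmul By Se ((1-η^3)*q*m)
            (fun y hy => by
              rw [hBy_def] at hy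
              exact le_of_lt (Finset.mem_filter.mp hy).2)
          rwa [nsmul_eq_mul] at this
        have c4 : (By.card:ℝ) * ((1-η^3)*q*m) ≤ (By.card:ℝ) * q * m :=
          aux_shrink (By.card:ℝ) η q m By.card.cast_nonneg hη0.le hq.le hm.le
        calc ∑ x ∈ Gx, ∑ y ∈ By, G x y ≤ ∑ x : X, ∑ y ∈ By, G x y := c1
          _ = ∑ y ∈ By, Se y := c2
          _ ≤ (By.card:ℝ) * ((1-η^3)*q*m) := c3
          _ ≤ (By.card:ℝ) * q * m := c4
      have hTeq : T = (∑ x ∈ Gx, Sd x) - ∑ x ∈ Gx, ∑ y ∈ By, G x y := by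
        rw [hT_def, hGxsplit]; ring
      rw [hTeq]
      have h1 : S - (Bx.card:ℝ)*q*n ≤ ∑ x ∈ Gx, Sd x := by linarith
      linarith
    -- rewrite P
    have hPrw : P = ∑ x' : X, ∑ y : Y, Se y * G x' y * Sd x' := by
      rw [hP_def]
      calc ∑ x : X, ∑ x' : X, ∑ y : Y, ∑ y' : Y, G x y * G x' y * G x' y'
          = ∑ x' : X, ∑ x : X, ∑ y : Y, ∑ y' : Y, G x y * G x' y * G x' y' :=
            Finset.sum_comm
        _ = ∑ x' : X, ∑ y : Y, ∑ x : X, ∑ y' : Y, G x y * G x' y * G x' y' := by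
            refine sum_congr rfl fun x' _ => Finset.sum_comm
        _ = ∑ x' : X, ∑ y : Y, Se y * G x' y * Sd x' := by
            refine sum_congr rfl fun x' _ => sum_congr rfl fun y _ => ?_
            simp only [hSe_def, hSd_def, Finset.sum_mul, Finset.mul_sum]
            exact Finset.sum_comm
    -- lower bound on P
    have hPbound : ((1-η^3)*q*m) * ((1-η^3)*q*n) * T ≤ P := by
      rw [hPrw]
      have h1δ : (0:ℝ) ≤ 1 - η^3 := by linarith
      have hterm : ∀ x' ∈ Gx, ∀ y ∈ Gy,
          ((1-η^3)*q*m) * G x' y * ((1-η^3)*q*n) ≤ Se y * G x' y * Sd x' := by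
        intro x' hx' y hy
        rw [hGx_def] at hx'
        rw [hGy_def] at hy
        have hSd' : (1-η^3)*q*n ≤ Sd x' := not_lt.mp (Finset.mem_filter.mp hx').2
        have hSe' : (1-η^3)*q*m ≤ Se y := not_lt.mp (Finset.mem_filter.mp hy).2
        have h1 : ((1-η^3)*q*m) * G x' y ≤ Se y * G x' y :=
          mul_le_mul_of_nonneg_right hSe' (hGnn x' y)
        have h2 : 0 ≤ ((1-η^3)*q*m) * G x' y :=
          mul_nonneg (mul_nonneg (mul_nonneg h1δ hq.le) hm.le) (hGnn x' y)
        exact mul_le_mul h1 hSd'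
          (mul_nonneg (mul_nonneg h1δ hq.le) hn.le) (le_trans h2 h1)
      calc ((1-η^3)*q*m) * ((1-η^3)*q*n) * T
          = ∑ x' ∈ Gx, ∑ y ∈ Gy, ((1-η^3)*q*m) * G x' y * ((1-η^3)*q*n) := by
            rw [hT_def]
            simp only [Finset.mul_sum]
            refine sum_congr rfl fun _ _ => sum_congr rfl fun _ _ => by ring
        _ ≤ ∑ x' ∈ Gx, ∑ y ∈ Gy, Se y * G x' y * Sd x' :=
            Finset.sum_le_sum fun x' hx' => Finset.sum_le_sum fun y hy =>
              hterm x' hx' y hy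
        _ ≤ ∑ x' ∈ Gx, ∑ y : Y, Se y * G x' y * Sd x' :=
            Finset.sum_le_sum fun x' _ =>
              Finset.sum_le_sum_of_subset_of_nonneg (Finset.subset_univ _)
                (fun y _ _ => mul_nonneg (mul_nonneg (hSenn y) (hGnn x' y)) (hSdnn x'))
        _ ≤ ∑ x' : X, ∑ y : Y, Se y * G x' y * Sd x' :=
            Finset.sum_le_sum_of_subset_of_nonneg (Finset.subset_univ _)
              (fun x' _ _ => sum_nonneg fun y _ =>
                mul_nonneg (mul_nonneg (hSenn y) (hGnn x' y)) (hSdnn x'))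
    -- combine
    have hT2 : (1 - η^9 - 10*η^3) * q * (m*n) ≤ T :=
      aux_T2 _ _ _ _ _ _ _ hT hBxcard hBycard hq hm hn
    rw [le_div_iff₀ (by positivity : (0:ℝ) < (m*n)^2)]
    exact aux_final η q m n T P hη0 hη14 hq hm hn hT2 hPbound
end

section
/- Let G be a bipartite graph between finite nonempty sets X and Y, let 0 ≤ q ≤ 1 and ε > 0. Suppose G(K_{1,1}) ≥ (1−ε)q and G(K_{2,2}) ≤ (1+ε)⁴ q⁴. Then (X,Y)_G satisfies DISC(q, q, 4 ε^{1/36}), i.e., |E_{x,y}[(G(x,y) − q) u(x) v(y)]| ≤ 4 ε^{1/36} q for all u : X → [0,1], v : Y → [0,1]. -/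
/-!
Let `c y = 𝔼ₓ G x y` be the column densities and split
`𝔼 (G - q) u v = 𝔼 (G - c) u v + 𝔼 u · 𝔼 (c - q) v`.
Two Cauchy–Schwarz steps bound the fourth power of the first term by the `K_{2,2}`-density of
`G - c`, which is at most `G(K_{2,2}) - (𝔼 c²)²`; one more bounds the square of the second term by
`𝔼 (c - q)² = 𝔼 c² - 2q G(K_{1,1}) + q²`. The two bounds pull in opposite directions in `𝔼 c²`,
and together with the hypotheses they give a discrepancy of at most `4 ε^{1/4} q`.
-/

open Finset
open scoped BigOperators

section Expect

variable {ι : Type*} [Fintype ι]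

lemma sq_expect_le_expect_sq (a : ι → ℝ) : (𝔼 i, a i) ^ 2 ≤ 𝔼 i, a i ^ 2 := by
  simp only [Fintype.expect_eq_sum_div_card, div_pow]
  rcases (Fintype.card ι).eq_zero_or_pos with h | h
  · simp [h]
  · rw [div_le_div_iff₀ (by positivity) (by positivity)]
    have := sq_sum_le_card_mul_sum_sq (s := univ) (f := a)
    rw [card_univ] at this
    nlinarith

lemma sq_expect_mul_le_expect_sq (w a : ι → ℝ) (hw : ∀ i, |w i| ≤ 1) :
    (𝔼 i, w i * a i) ^ 2 ≤ 𝔼 i, a i ^ 2 :=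
  (sq_expect_le_expect_sq _).trans <| expect_le_expect fun i _ => by
    rw [mul_pow]
    exact mul_le_of_le_one_left (sq_nonneg _) ((sq_le_one_iff_abs_le_one _).2 (hw i))

lemma sq_expect_mul_sub_le [Nonempty ι] (c v : ι → ℝ) (q : ℝ) (hv : ∀ i, |v i| ≤ 1) :
    (𝔼 i, v i * (c i - q)) ^ 2 ≤ 𝔼 i, c i ^ 2 - 2 * q * 𝔼 i, c i + q ^ 2 :=
  (sq_expect_mul_le_expect_sq _ _ hv).trans_eq <| by
    simp_rw [sub_sq, expect_add_distrib, expect_sub_distrib]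
    rw [Fintype.expect_const, ← expect_mul, ← mul_expect]
    ring

end Expect

section Bipartite

variable {X Y : Type*} [Fintype X] [Fintype Y]

lemma expect_expect_eq_sum_sum_div_s16 (f : X → Y → ℝ) :
    𝔼 x, 𝔼 y, f x y = (∑ x, ∑ y, f x y) / (Fintype.card X * Fintype.card Y) := by
  simp only [Fintype.expect_eq_sum_div_card, ← sum_div, div_div, mul_comm]

noncomputable def k22Density (f : X → Y → ℝ) : ℝ := 𝔼 y, 𝔼 y', (𝔼 x, f x y * f x y') ^ 2

lemma k22Density_eq_sum_div (f : X → Y → ℝ) :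
    k22Density f = (∑ x, ∑ x', ∑ y, ∑ y', f x y * f x y' * f x' y * f x' y') /
      ((Fintype.card X * Fintype.card Y : ℝ) ^ 2) := by
  simp_rw [k22Density, sq, expect_mul_expect, expect_comm (s := (univ : Finset Y))
    (t := (univ : Finset X)), Fintype.expect_eq_sum_div_card, ← sum_div, div_div, mul_assoc]
  ring

lemma pow_four_expect_le_k22Density (f : X → Y → ℝ) {u : X → ℝ} {v : Y → ℝ}
    (hu : ∀ x, |u x| ≤ 1) (hv : ∀ y, |v y| ≤ 1) :
    (𝔼 x, 𝔼 y, f x y * u x * v y) ^ 4 ≤ k22Density f := by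
  set L : Y → Y → ℝ := fun y y' => 𝔼 x, f x y * f x y'
  have first : (𝔼 x, 𝔼 y, f x y * u x * v y) ^ 2 ≤ 𝔼 y, 𝔼 y', v y * v y' * L y y' := calc
    _ = (𝔼 x, u x * 𝔼 y, f x y * v y) ^ 2 := by
      simp_rw [mul_expect]
      exact congrArg (· ^ 2) <| expect_congr rfl fun x _ => expect_congr rfl fun y _ => by ring
    _ ≤ 𝔼 x, (𝔼 y, f x y * v y) ^ 2 := sq_expect_mul_le_expect_sq _ _ hu
    _ = 𝔼 y, 𝔼 y', v y * v y' * L y y' := by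
      simp_rw [L, sq, expect_mul_expect, mul_expect]
      rw [expect_comm]
      refine expect_congr rfl fun y _ => ?_
      rw [expect_comm]
      exact expect_congr rfl fun y' _ => expect_congr rfl fun x _ => by ring
  have second : (𝔼 y, 𝔼 y', v y * v y' * L y y') ^ 2 ≤ k22Density f := calc
    _ ≤ 𝔼 y, (𝔼 y', v y * v y' * L y y') ^ 2 := sq_expect_le_expect_sq _
    _ ≤ 𝔼 y, 𝔼 y', L y y' ^ 2 := expect_le_expect fun y _ =>
      sq_expect_mul_le_expect_sq _ _ fun y' => by
        rw [abs_mul]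
        exact mul_le_one₀ (hv y) (abs_nonneg _) (hv y')
  calc _ = ((𝔼 x, 𝔼 y, f x y * u x * v y) ^ 2) ^ 2 := by ring
    _ ≤ (𝔼 y, 𝔼 y', v y * v y' * L y y') ^ 2 := pow_le_pow_left₀ (sq_nonneg _) first 2
    _ ≤ k22Density f := second

lemma k22Density_sub_expect_le [Nonempty X] (G : X → Y → ℝ) :
    k22Density (fun x y => G x y - 𝔼 x', G x' y) ≤
      k22Density G - (𝔼 y, (𝔼 x, G x y) ^ 2) ^ 2 := by
  set c : Y → ℝ := fun y => 𝔼 x, G x y with hc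
  have codegree : ∀ y y', 𝔼 x, (G x y - c y) * (G x y' - c y') =
      𝔼 x, G x y * G x y' - c y * c y' := by
    intro y y'
    simp only [sub_mul, mul_sub, expect_sub_distrib, ← expect_mul, ← mul_expect, hc,
      Fintype.expect_const]
    ring
  have cross : (𝔼 y, c y ^ 2) ^ 2 ≤ 𝔼 y, 𝔼 y', (𝔼 x, G x y * G x y') * (c y * c y') := calc
    (𝔼 y, c y ^ 2) ^ 2 = (𝔼 x, 𝔼 y, G x y * c y) ^ 2 := by
      rw [expect_comm]
      simp_rw [← expect_mul, hc, sq]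
    _ ≤ 𝔼 x, (𝔼 y, G x y * c y) ^ 2 := sq_expect_le_expect_sq _
    _ = _ := by
      simp_rw [sq, expect_mul_expect, expect_mul, ← expect_comm (s := (univ : Finset X))]
      exact expect_congr rfl fun y _ => expect_congr rfl fun y' _ =>
        expect_congr rfl fun x _ => by ring
  have square : (𝔼 y, c y ^ 2) ^ 2 = 𝔼 y, 𝔼 y', (c y * c y') ^ 2 := by
    simp_rw [sq, expect_mul_expect]
    exact expect_congr rfl fun y _ => expect_congr rfl fun y' _ => by ring
  have expand : k22Density (fun x y => G x y - c y) = k22Density G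
      - 2 * 𝔼 y, 𝔼 y', (𝔼 x, G x y * G x y') * (c y * c y') + 𝔼 y, 𝔼 y', (c y * c y') ^ 2 := by
    simp_rw [k22Density, codegree, sub_sq, expect_add_distrib, expect_sub_distrib,
      mul_assoc (2 : ℝ), ← mul_expect]
  rw [expand, ← square]
  linarith

end Bipartite

lemma pow_four_add_sq_le_of_k22_bounds {a b κ χ d q ε : ℝ} (hq : 0 < q) (hε : 0 ≤ ε)
    (hε1 : ε ≤ 1) (hχ : 0 ≤ χ) (ha : a ^ 4 ≤ κ - χ ^ 2) (hb : b ^ 2 ≤ χ - 2 * q * d + q ^ 2)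
    (hκ : κ ≤ (1 + ε) ^ 4 * q ^ 4) (hd : (1 - ε) * q ≤ d) :
    a ^ 4 + 8 * q ^ 2 * b ^ 2 ≤ 40 * ε * q ^ 4 := by
  set M := (1 + ε) ^ 2 * q ^ 2
  have hχM : χ ≤ M := by
    refine (pow_le_pow_iff_left₀ hχ (by positivity) two_ne_zero).1 ?_
    nlinarith [pow_nonneg (sq_nonneg a) 2]
  have hM : M ≤ 4 * q ^ 2 := by
    have : (1 + ε) ^ 2 ≤ 4 := by nlinarith
    nlinarith [sq_nonneg q]
  have ha' : a ^ 4 ≤ 8 * q ^ 2 * (M - χ) := by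
    nlinarith [mul_le_mul_of_nonneg_left (add_le_add hM hχM) (sub_nonneg.2 hχM)]
  have hb' : 8 * q ^ 2 * b ^ 2 ≤ 8 * q ^ 2 * (χ - 2 * q * d + q ^ 2) := by gcongr
  have hqd : (1 - ε) * q ^ 2 ≤ q * d := by nlinarith
  calc a ^ 4 + 8 * q ^ 2 * b ^ 2 ≤ 8 * q ^ 2 * (M - 2 * (q * d) + q ^ 2) := by linarith
    _ ≤ 8 * q ^ 2 * ((1 + ε) ^ 2 * q ^ 2 - 2 * ((1 - ε) * q ^ 2) + q ^ 2) := by gcongr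
    _ = 8 * (4 * ε + ε ^ 2) * q ^ 4 := by ring
    _ ≤ 40 * ε * q ^ 4 := by nlinarith [pow_pos hq 4]

lemma add_le_of_pow_four_add_sq_le {a b E q : ℝ} (hE : 0 < E) (hEq : E ≤ q)
    (h : a ^ 4 + 8 * q ^ 2 * b ^ 2 ≤ 40 * E ^ 4) : a + b ≤ 4 * E := by
  -- tangent lines of `a ↦ a⁴` and `b ↦ b²` at `2E`
  have tangent_a : 32 * E ^ 3 * a - 48 * E ^ 4 ≤ a ^ 4 := by
    nlinarith [mul_nonneg (sq_nonneg (a - 2 * E))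
      (add_nonneg (sq_nonneg (a + 2 * E)) (sq_nonneg E))]
  have tangent_b : 32 * E ^ 3 * b - 32 * E ^ 4 ≤ 8 * q ^ 2 * b ^ 2 := by
    nlinarith [mul_nonneg (sq_nonneg E) (sq_nonneg (b - 2 * E)),
      mul_le_mul_of_nonneg_right (pow_le_pow_left₀ hE.le hEq 2) (sq_nonneg b)]
  have : E ^ 3 * (a + b) ≤ E ^ 3 * (4 * E) := by nlinarith [pow_pos hE 4]
  exact le_of_mul_le_mul_left this (by positivity)

lemma add_le_of_k22_bounds {a b κ χ d q ε : ℝ} (hq : 0 < q) (hε : 0 < ε) (hε1 : ε ≤ 1)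
    (hχ : 0 ≤ χ) (ha : a ^ 4 ≤ κ - χ ^ 2) (hb : b ^ 2 ≤ χ - 2 * q * d + q ^ 2)
    (hκ : κ ≤ (1 + ε) ^ 4 * q ^ 4) (hd : (1 - ε) * q ≤ d) :
    a + b ≤ 4 * ε ^ (1 / 4 : ℝ) * q := by
  have hε4 : (ε ^ (1 / 4 : ℝ)) ^ 4 = ε := by
    rw [← Real.rpow_natCast, ← Real.rpow_mul hε.le]
    norm_num
  refine (add_le_of_pow_four_add_sq_le (by positivity)
    (mul_le_of_le_one_left hq.le (Real.rpow_le_one hε.le hε1 (by norm_num))) ?_).trans_eq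
    (mul_assoc _ _ _).symm
  rw [mul_pow, hε4, ← mul_assoc]
  exact pow_four_add_sq_le_of_k22_bounds hq hε.le hε1 hχ ha hb hκ hd

theorem stmt_16_general {X Y : Type*} [Fintype X] [Fintype Y] [Nonempty X] [Nonempty Y]
    (G : X → Y → ℝ)
    (q ε : ℝ) (hq : 0 < q) (hε : 0 < ε) (hε1 : ε ≤ 1)
    (h11 : (1 - ε) * q ≤ (∑ x : X, ∑ y : Y, G x y) /
        ((Fintype.card X : ℝ) * (Fintype.card Y : ℝ)))
    (h22 : (∑ x : X, ∑ x' : X, ∑ y : Y, ∑ y' : Y, G x y * G x y' * G x' y * G x' y') /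
        (((Fintype.card X : ℝ) * (Fintype.card Y : ℝ)) ^ 2) ≤ (1 + ε) ^ 4 * q ^ 4) :
    ∀ u : X → ℝ, ∀ v : Y → ℝ,
      (∀ x, 0 ≤ u x ∧ u x ≤ 1) → (∀ y, 0 ≤ v y ∧ v y ≤ 1) →
      |(∑ x : X, ∑ y : Y, (G x y - q) * u x * v y) /
          ((Fintype.card X : ℝ) * (Fintype.card Y : ℝ))| ≤ 4 * ε ^ ((1 : ℝ) / 36) * q := by
  intro u v hu hv
  have hu' : ∀ x, |u x| ≤ 1 := fun x => abs_le.2 ⟨by linarith [(hu x).1], (hu x).2⟩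
  have hv' : ∀ y, |v y| ≤ 1 := fun y => abs_le.2 ⟨by linarith [(hv y).1], (hv y).2⟩
  set c : Y → ℝ := fun y => 𝔼 x, G x y with hc
  set A := 𝔼 x, 𝔼 y, (G x y - c y) * u x * v y
  set B := 𝔼 y, v y * (c y - q)
  have split : 𝔼 x, 𝔼 y, (G x y - q) * u x * v y = A + (𝔼 x, u x) * B := by
    simp_rw [A, B, expect_mul_expect, ← expect_add_distrib]
    exact expect_congr rfl fun x _ => expect_congr rfl fun y _ => by ring
  have hA : |A| ^ 4 ≤ k22Density G - (𝔼 y, c y ^ 2) ^ 2 := by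
    rw [Even.pow_abs (by decide)]
    exact (pow_four_expect_le_k22Density _ hu' hv').trans (k22Density_sub_expect_le G)
  have hd : (1 - ε) * q ≤ 𝔼 y, c y := by rwa [hc, expect_comm, expect_expect_eq_sum_sum_div_s16]
  have hκ : k22Density G ≤ (1 + ε) ^ 4 * q ^ 4 := by rwa [k22Density_eq_sum_div]
  have hU : |𝔼 x, u x| ≤ 1 := (abs_expect_le _ _).trans (expect_le univ_nonempty fun x _ => hu' x)
  rw [← expect_expect_eq_sum_sum_div_s16, split]
  calc |A + (𝔼 x, u x) * B| ≤ |A| + |B| := by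
        refine (abs_add_le _ _).trans ?_
        rw [abs_mul]
        gcongr
        exact mul_le_of_le_one_left (abs_nonneg _) hU
    _ ≤ 4 * ε ^ (1 / 4 : ℝ) * q :=
        add_le_of_k22_bounds hq hε hε1 (expect_nonneg fun y _ => sq_nonneg (c y)) hA
          (by rw [sq_abs]; exact sq_expect_mul_sub_le c v q hv') hκ hd
    _ ≤ 4 * ε ^ ((1 : ℝ) / 36) * q := by
        have := Real.rpow_le_rpow_of_exponent_ge hε hε1 (show (1 : ℝ) / 36 ≤ 1 / 4 by norm_num)
        gcongr

theorem stmt_16 {X Y : Type*} [Fintype X] [Fintype Y] [Nonempty X] [Nonempty Y]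
    (G : X → Y → ℝ) (hG : ∀ x y, 0 ≤ G x y ∧ G x y ≤ 1)
    (q ε : ℝ) (hq : 0 < q) (hq1 : q ≤ 1) (hε : 0 < ε) (hε1 : ε ≤ 1)
    (h11 : (1 - ε) * q ≤ (∑ x : X, ∑ y : Y, G x y) /
        ((Fintype.card X : ℝ) * (Fintype.card Y : ℝ)))
    (h22 : (∑ x : X, ∑ x' : X, ∑ y : Y, ∑ y' : Y, G x y * G x y' * G x' y * G x' y') /
        (((Fintype.card X : ℝ) * (Fintype.card Y : ℝ)) ^ 2) ≤ (1 + ε) ^ 4 * q ^ 4) :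
    ∀ u : X → ℝ, ∀ v : Y → ℝ,
      (∀ x, 0 ≤ u x ∧ u x ≤ 1) → (∀ y, 0 ≤ v y ∧ v y ≤ 1) →
      |(∑ x : X, ∑ y : Y, (G x y - q) * u x * v y) /
          ((Fintype.card X : ℝ) * (Fintype.card Y : ℝ))| ≤ 4 * ε ^ ((1 : ℝ) / 36) * q :=
  stmt_16_general G q ε hq hε hε1 h11 h22
end

section
/- Let Γ be a graph on n vertices that is (p, β)-jumbled with β ≤ (1/10) p² n, i.e., for all vertex subsets X, Y, |e(X,Y) − p|X||Y|| ≤ β √(|X||Y|). Then in every 2-coloring of the edges of Γ, the number of monochromatic triangles is at least (p³ − 10 p β/n) n³ / 24. -/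
/-!
Write `e(X, Y)` for the number of ordered edges of `Γ` between `X` and `Y`, and `N_R v`, `N_B v`,
`N v` for the red, blue and full neighbourhoods of `v`. Expanding `tr((A_R + A_B)³)` and using
cyclicity of the trace gives Goodman's identity
`∑_v (3 e(N_R v, N_R v) + 3 e(N_B v, N_B v) + e(N v, N v) - 6 e(N_R v, N_B v))`
`= 24 (#red + #blue)`.
Jumbledness bounds each summand below by `p d² - 7 β d` with `d = r + b = deg v` (`r`, `b` the
red and blue degrees), the quadratic terms leaving `3 p (r - b)² ≥ 0`. Bounding `p d²` below by
its tangent at `d = p n` and using `∑_v d ≥ p n² - β n` (jumbledness for `X = Y = V`) gives the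
result.
-/

open Finset

theorem Matrix.goodman_trace_identity {n R : Type*} [Fintype n] [DecidableEq n] [CommSemiring R]
    (A B : Matrix n n R) :
    3 * (A * (A + B) * A).trace + 3 * (B * (A + B) * B).trace + ((A + B) * (A + B) * (A + B)).trace
      = 4 * ((A * A * A).trace + (B * B * B).trace) + 6 * (A * (A + B) * B).trace := by
  have hABA : (A * B * A).trace = (A * A * B).trace := trace_mul_cycle A B A
  have hBAA : (B * A * A).trace = (A * A * B).trace := (trace_mul_cycle A A B).symm
  have hBAB : (B * A * B).trace = (A * B * B).trace := (trace_mul_cycle A B B).symm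
  have hBBA : (B * B * A).trace = (A * B * B).trace := trace_mul_cycle B B A
  simp only [add_mul, mul_add, trace_add, hABA, hBAA, hBAB, hBBA]
  ring

theorem Finset.card_filter_pairwise_ne_of_card_eq_three {α : Type*} [DecidableEq α]
    {s : Finset α} (hs : #s = 3) :
    #{t ∈ s ×ˢ s ×ˢ s | t.1 ≠ t.2.1 ∧ t.1 ≠ t.2.2 ∧ t.2.1 ≠ t.2.2} = 6 := by
  obtain ⟨a, b, c, hab, hac, hbc, rfl⟩ := card_eq_three.1 hs
  have : {t ∈ ({a, b, c} : Finset α) ×ˢ {a, b, c} ×ˢ {a, b, c} |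
      t.1 ≠ t.2.1 ∧ t.1 ≠ t.2.2 ∧ t.2.1 ≠ t.2.2} =
      {(a, b, c), (a, c, b), (b, a, c), (b, c, a), (c, a, b), (c, b, a)} := by
    ext ⟨x, y, z⟩
    simp only [mem_filter, mem_product, mem_insert, mem_singleton, Prod.mk.injEq]
    grind
  rw [this]
  simp [hab, hac, hbc, hab.symm, hac.symm, hbc.symm]

namespace SimpleGraph

variable {V : Type*}

theorem adjMatrix_sup_of_disjoint {R : Type*} [AddZeroClass R] [One R] {G H : SimpleGraph V}
    [DecidableRel G.Adj] [DecidableRel H.Adj] [DecidableRel (G ⊔ H).Adj] (h : Disjoint G H) :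
    (G ⊔ H).adjMatrix R = G.adjMatrix R + H.adjMatrix R := by
  ext v w
  by_cases hG : G.Adj v w <;> by_cases hH : H.Adj v w
  · exact False.elim (h.le_bot ⟨hG, hH⟩)
  all_goals simp [adjMatrix_apply, hG, hH]

theorem card_interedges_eq_sum (G : SimpleGraph V) [DecidableRel G.Adj] (s t : Finset V) :
    #(G.interedges s t) = ∑ x ∈ s, #{y ∈ t | G.Adj x y} := by
  simp only [interedges_def, card_filter, sum_product]

theorem card_interedges_univ [Fintype V] (G : SimpleGraph V) [DecidableRel G.Adj] :
    #(G.interedges univ univ) = ∑ v, G.degree v := by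
  simp only [card_interedges_eq_sum, ← card_neighborFinset_eq_degree, neighborFinset_eq_filter]

theorem adjMatrix_mul_mul_apply_self [Fintype V] {R : Type*} [Semiring R]
    (G K H : SimpleGraph V) [DecidableRel G.Adj] [DecidableRel K.Adj] [DecidableRel H.Adj] (v : V) :
    (G.adjMatrix R * K.adjMatrix R * H.adjMatrix R) v v
      = #(K.interedges (G.neighborFinset v) (H.neighborFinset v)) := by
  rw [Matrix.mul_assoc, adjMatrix_mul_apply, card_interedges_eq_sum, Nat.cast_sum]
  refine sum_congr rfl fun x _ => ?_
  rw [adjMatrix_mul_apply]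
  simp only [adjMatrix_apply, sum_boole]
  congr 2
  ext y
  simp [adj_comm H y v, and_comm]

section Triangles

variable [Fintype V] [DecidableEq V] (G : SimpleGraph V) [DecidableRel G.Adj]

theorem card_triangle_triples :
    #{t : V × V × V | G.Adj t.1 t.2.1 ∧ G.Adj t.1 t.2.2 ∧ G.Adj t.2.1 t.2.2}
      = 6 * #(G.cliqueFinset 3) := by
  rw [card_eq_sum_card_fiberwise (f := fun t => {t.1, t.2.1, t.2.2}) (t := G.cliqueFinset 3)
    fun t ht => by simpa [is3Clique_triple_iff] using ht, sum_const_nat (m := 6), mul_comm]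
  intro s hs
  rw [mem_cliqueFinset_iff] at hs
  rw [← card_filter_pairwise_ne_of_card_eq_three hs.card_eq]
  congr 1
  ext ⟨x, y, z⟩
  simp only [mem_filter, mem_univ, true_and, mem_product]
  constructor
  · rintro ⟨⟨hxy, hxz, hyz⟩, rfl⟩
    simp [hxy.ne, hxz.ne, hyz.ne]
  · rintro ⟨⟨hx, hy, hz⟩, hxy, hxz, hyz⟩
    refine ⟨⟨hs.isClique hx hy hxy, hs.isClique hx hz hxz, hs.isClique hy hz hyz⟩, ?_⟩
    refine eq_of_subset_of_card_le (by simp [insert_subset_iff, hx, hy, hz]) ?_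
    rw [hs.card_eq, card_eq_three.2 ⟨x, y, z, hxy, hxz, hyz, rfl⟩]

theorem sum_card_interedges_neighborFinset_self :
    ∑ v, #(G.interedges (G.neighborFinset v) (G.neighborFinset v)) = 6 * #(G.cliqueFinset 3) := by
  rw [← card_triangle_triples, card_eq_sum_card_fiberwise (f := Prod.fst) (t := univ) (by simp)]
  refine sum_congr rfl fun v _ => card_nbij' (Prod.mk v) Prod.snd ?_ ?_ ?_ ?_ <;>
    aesop (add simp [Set.MapsTo, Set.LeftInvOn, mem_interedges_iff])

theorem trace_adjMatrix_mul_self_mul_self :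
    (G.adjMatrix ℕ * G.adjMatrix ℕ * G.adjMatrix ℕ).trace = 6 * #(G.cliqueFinset 3) := by
  simp only [Matrix.trace, Matrix.diag_apply, adjMatrix_mul_mul_apply_self, Nat.cast_id,
    sum_card_interedges_neighborFinset_self]

end Triangles

theorem goodman_identity [Fintype V] [DecidableEq V] {R B Γ : SimpleGraph V}
    [DecidableRel R.Adj] [DecidableRel B.Adj] [DecidableRel Γ.Adj]
    (hRB : R ⊔ B = Γ) (hdisj : Disjoint R B) :
    ∑ v, (3 * #(Γ.interedges (R.neighborFinset v) (R.neighborFinset v))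
        + 3 * #(Γ.interedges (B.neighborFinset v) (B.neighborFinset v))
        + #(Γ.interedges (Γ.neighborFinset v) (Γ.neighborFinset v)))
      = 24 * (#(R.cliqueFinset 3) + #(B.cliqueFinset 3))
        + 6 * ∑ v, #(Γ.interedges (R.neighborFinset v) (B.neighborFinset v)) := by
  subst hRB
  have h := Matrix.goodman_trace_identity (R.adjMatrix ℕ) (B.adjMatrix ℕ)
  rw [← adjMatrix_sup_of_disjoint hdisj, trace_adjMatrix_mul_self_mul_self R,
    trace_adjMatrix_mul_self_mul_self B] at h
  simp only [Matrix.trace, Matrix.diag_apply, adjMatrix_mul_mul_apply_self, Nat.cast_id] at h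
  rw [sum_add_distrib, sum_add_distrib, ← mul_sum, ← mul_sum, h]
  ring

def IsJumbled (Γ : SimpleGraph V) [DecidableRel Γ.Adj] (p β : ℝ) : Prop :=
  ∀ X Y : Finset V, |(#(Γ.interedges X Y) : ℝ) - p * #X * #Y| ≤ β * √(#X * #Y)

namespace IsJumbled

variable {Γ : SimpleGraph V} [DecidableRel Γ.Adj] {p β : ℝ}

theorem sub_le_card_interedges_self (hΓ : Γ.IsJumbled p β) (X : Finset V) :
    p * #X ^ 2 - β * #X ≤ #(Γ.interedges X X) := by
  have h := (abs_le.1 (hΓ X X)).1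
  rw [Real.sqrt_mul_self (Nat.cast_nonneg _)] at h
  linarith

theorem card_interedges_le (hΓ : Γ.IsJumbled p β) (hβ : 0 ≤ β) (X Y : Finset V) :
    #(Γ.interedges X Y) ≤ p * #X * #Y + β * (#X + #Y) / 2 := by
  have hamgm : √((#X : ℝ) * #Y) ≤ (#X + #Y) / 2 :=
    Real.sqrt_le_iff.2 ⟨by positivity, by nlinarith [sq_nonneg ((#X : ℝ) - #Y)]⟩
  nlinarith [(abs_le.1 (hΓ X Y)).2, mul_le_mul_of_nonneg_left hamgm hβ]

theorem local_goodman_bound (hΓ : Γ.IsJumbled p β) (hp : 0 ≤ p) (hβ : 0 ≤ β)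
    {X Y Z : Finset V} (hZ : #Z = #X + #Y) :
    p * #Z ^ 2 - 7 * β * #Z ≤ 3 * #(Γ.interedges X X) + 3 * #(Γ.interedges Y Y)
      + #(Γ.interedges Z Z) - 6 * #(Γ.interedges X Y) := by
  have hZ' : (#Z : ℝ) = #X + #Y := by exact_mod_cast hZ
  have hZZ := hΓ.sub_le_card_interedges_self Z
  rw [hZ'] at hZZ ⊢
  nlinarith [hΓ.sub_le_card_interedges_self X, hΓ.sub_le_card_interedges_self Y,
    hΓ.card_interedges_le hβ X Y, mul_nonneg hp (sq_nonneg ((#X : ℝ) - #Y))]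

theorem sub_le_sum_degree [Fintype V] (hΓ : Γ.IsJumbled p β) :
    p * Fintype.card V ^ 2 - β * Fintype.card V ≤ ∑ v, (Γ.degree v : ℝ) := by
  have h := (abs_le.1 (hΓ univ univ)).1
  rw [card_interedges_univ, card_univ, Real.sqrt_mul_self (Nat.cast_nonneg _)] at h
  push_cast at h
  linarith

end IsJumbled

end SimpleGraph

open SimpleGraph

theorem stmt_19_general {V : Type*} [Fintype V] [DecidableEq V]
    (Γ : SimpleGraph V) [DecidableRel Γ.Adj]
    (p β : ℝ) (hp : 0 < p) (hp1 : p ≤ 1) (hβ0 : 0 ≤ β)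
    (hjumb : ∀ X Y : Finset V,
      |((((X ×ˢ Y).filter fun e => Γ.Adj e.1 e.2).card : ℝ)) -
          p * (X.card : ℝ) * (Y.card : ℝ)|
        ≤ β * Real.sqrt ((X.card : ℝ) * (Y.card : ℝ)))
    (hβ : β ≤ p ^ 2 * (Fintype.card V : ℝ) / 10)
    (R B : SimpleGraph V) [DecidableRel R.Adj] [DecidableRel B.Adj]
    (hRB : R ⊔ B = Γ) (hdisj : Disjoint R B) :
    (p ^ 3 - 10 * p * β / (Fintype.card V : ℝ)) * (Fintype.card V : ℝ) ^ 3 / 24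
      ≤ ((R.cliqueFinset 3).card : ℝ) + ((B.cliqueFinset 3).card : ℝ) := by
  have hΓ : Γ.IsJumbled p β := hjumb
  set n : ℝ := (Fintype.card V : ℝ)
  have hsplit (v : V) : #(Γ.neighborFinset v) = #(R.neighborFinset v) + #(B.neighborFinset v) := by
    subst hRB
    rw [neighborFinset_sup_of_disjoint (h := hdisj), card_disjUnion]
  have hlocal (v : V) :
      (2 * p ^ 2 * n - 7 * β) * Γ.degree v - p ^ 3 * n ^ 2
          + 6 * #(Γ.interedges (R.neighborFinset v) (B.neighborFinset v))
        ≤ 3 * #(Γ.interedges (R.neighborFinset v) (R.neighborFinset v))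
          + 3 * #(Γ.interedges (B.neighborFinset v) (B.neighborFinset v))
          + #(Γ.interedges (Γ.neighborFinset v) (Γ.neighborFinset v)) := by
    have h := hΓ.local_goodman_bound hp.le hβ0 (hsplit v)
    rw [card_neighborFinset_eq_degree] at h
    nlinarith [mul_nonneg hp.le (sq_nonneg ((Γ.degree v : ℝ) - p * n))]
  have hgoodman := congrArg (Nat.cast : ℕ → ℝ) (goodman_identity hRB hdisj)
  push_cast at hgoodman
  have hsum := sum_le_sum fun v (_ : v ∈ univ) => hlocal v
  rw [hgoodman] at hsum
  simp only [sum_add_distrib, sum_sub_distrib, ← mul_sum, sum_const, card_univ,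
    nsmul_eq_mul] at hsum
  have hdeg := mul_le_mul_of_nonneg_left hΓ.sub_le_sum_degree
    (by linarith : 0 ≤ 2 * p ^ 2 * n - 7 * β)
  have hn : (p ^ 3 - 10 * p * β / n) * n ^ 3 = p ^ 3 * n ^ 3 - 10 * p * β * n ^ 2 := by
    rcases eq_or_ne n 0 with h | h
    · simp [h]
    · field_simp
  rw [hn]
  linarith [mul_le_mul_of_nonneg_right hp1 (by positivity : 0 ≤ p * β * n ^ 2),
    (by positivity : 0 ≤ p * β * n ^ 2), (by positivity : 0 ≤ β ^ 2 * n)]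

theorem stmt_19 {V : Type*} [Fintype V] [DecidableEq V] [Nonempty V]
    (Γ : SimpleGraph V) [DecidableRel Γ.Adj]
    (p β : ℝ) (hp : 0 < p) (hp1 : p ≤ 1) (hβ0 : 0 ≤ β)
    (hjumb : ∀ X Y : Finset V,
      |((((X ×ˢ Y).filter fun e => Γ.Adj e.1 e.2).card : ℝ)) -
          p * (X.card : ℝ) * (Y.card : ℝ)|
        ≤ β * Real.sqrt ((X.card : ℝ) * (Y.card : ℝ)))
    (hβ : β ≤ p ^ 2 * (Fintype.card V : ℝ) / 10)
    (R B : SimpleGraph V) [DecidableRel R.Adj] [DecidableRel B.Adj]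
    (hRB : R ⊔ B = Γ) (hdisj : Disjoint R B) :
    (p ^ 3 - 10 * p * β / (Fintype.card V : ℝ)) * (Fintype.card V : ℝ) ^ 3 / 24
      ≤ ((R.cliqueFinset 3).card : ℝ) + ((B.cliqueFinset 3).card : ℝ) :=
  stmt_19_general Γ p β hp hp1 hβ0 hjumb hβ R B hRB hdisj
end
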